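/- arXiv:2302.07869 — 9 statements merged into one kernel-verified Lean document; each statement's English description precedes it below -/
import Mathlib

section
/- (Bounded iterates for SF-OGD.) Let α ∈ (0,1), D > 0, η > 0, and let S_1, …, S_T ∈ [0, D]. Define the SF-OGD iterates by choosing any initialization ŝ_1 ∈ [−η, D+η] and setting, for t ≥ 1, err_t := 1{ŝ_t < S_t} and ŝ_{t+1} := ŝ_t + η (err_t − α) / sqrt(Σ_{τ=1}^{t} (err_τ − α)²). Then ŝ_t ∈ [−η, D+η] for all t ∈ {1, …, T}. -/
/-- Bounded iterates for SF-OGD: the iterates of Scale-Free Online Gradient Descent on the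
pinball loss, initialized in `[-η, D+η]`, remain in `[-η, D+η]` when all true radii lie in
`[0, D]`. -/
theorem sfogd_bounded_iterates (α D η : ℝ) (hα : α ∈ Set.Ioo (0:ℝ) 1)
    (hD : 0 < D) (hη : 0 < η) (T : ℕ)
    (S : ℕ → ℝ) (hS : ∀ t ∈ Finset.Icc 1 T, S t ∈ Set.Icc 0 D)
    (shat err : ℕ → ℝ)
    (hinit : shat 1 ∈ Set.Icc (-η) (D + η))
    (herr : ∀ t, 1 ≤ t → t ≤ T → err t = if shat t < S t then (1:ℝ) else 0)
    (hrec : ∀ t, 1 ≤ t → t < T →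
      shat (t + 1) = shat t + η * (err t - α) /
        Real.sqrt (∑ τ ∈ Finset.Icc 1 t, (err τ - α) ^ 2)) :
    ∀ t ∈ Finset.Icc 1 T, shat t ∈ Set.Icc (-η) (D + η) := by
  obtain ⟨hα0, hα1⟩ := hα
  intro t ht
  rw [Finset.mem_Icc] at ht
  obtain ⟨ht1, htT⟩ := ht
  induction t, ht1 using Nat.le_induction with
  | base => exact hinit
  | succ n hn ih =>
    have hnT : n < T := by omega
    have hprev := ih (by omega)
    obtain ⟨hprevl, hprevu⟩ := hprev
    have herrn := herr n hn (le_of_lt hnT)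
    obtain ⟨hSl, hSu⟩ := hS n (Finset.mem_Icc.mpr ⟨hn, le_of_lt hnT⟩)
    have hmemn : n ∈ Finset.Icc 1 n := Finset.mem_Icc.mpr ⟨hn, le_refl n⟩
    have hsum_ge : (err n - α)^2 ≤ ∑ τ ∈ Finset.Icc 1 n, (err τ - α)^2 :=
      Finset.single_le_sum (f := fun τ => (err τ - α)^2) (fun i _ => sq_nonneg _) hmemn
    have hne : err n - α ≠ 0 := by
      rw [herrn]; split <;> intro h <;> nlinarith
    have hsq : 0 < (err n - α)^2 := by positivity
    set Ssum := ∑ τ ∈ Finset.Icc 1 n, (err τ - α)^2 with hSsum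
    have hSsumpos : 0 < Ssum := lt_of_lt_of_le hsq hsum_ge
    have hsqrtpos : 0 < Real.sqrt Ssum := Real.sqrt_pos.mpr hSsumpos
    have habs : |err n - α| ≤ Real.sqrt Ssum := by
      calc |err n - α| = Real.sqrt ((err n - α)^2) := (Real.sqrt_sq_eq_abs _).symm
      _ ≤ Real.sqrt Ssum := Real.sqrt_le_sqrt hsum_ge
    have hrecn := hrec n hn hnT
    rw [← hSsum] at hrecn
    have hstep : |η * (err n - α) / Real.sqrt Ssum| ≤ η := by
      rw [abs_div, abs_mul, abs_of_pos hη, abs_of_pos hsqrtpos, div_le_iff₀ hsqrtpos]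
      nlinarith [abs_nonneg (err n - α)]
    rw [abs_le] at hstep
    by_cases hlt : shat n < S n
    · have he1 : err n = 1 := by rw [herrn, if_pos hlt]
      have hpos : 0 ≤ η * (err n - α) / Real.sqrt Ssum := by
        apply div_nonneg _ (le_of_lt hsqrtpos)
        nlinarith
      constructor
      · rw [hrecn]; linarith
      · rw [hrecn]; linarith [hstep.2]
    · have he0 : err n = 0 := by rw [herrn, if_neg hlt]
      push_neg at hlt
      have hneg : η * (err n - α) / Real.sqrt Ssum ≤ 0 := by
        apply div_nonpos_of_nonpos_of_nonneg _ (le_of_lt hsqrtpos)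
        nlinarith
      constructor
      · rw [hrecn]; linarith [hstep.1]
      · rw [hrecn]; linarith
end

section
/- (Anytime regret bound for SF-OGD.) Let α ∈ (0,1), D > 0, and let S_1, …, S_T ∈ [0, D]. Run SF-OGD with learning rate η = D/√3 and any initialization ŝ_1 ∈ [0, D], producing iterates ŝ_t with err_t = 1{ŝ_t < S_t}. Then for every t ∈ {1, …, T}, the regret Reg(t) := Σ_{τ=1}^{t} ℓ_{1−α}(S_τ, ŝ_τ) − inf_{s ∈ ℝ} Σ_{τ=1}^{t} ℓ_{1−α}(S_τ, s) satisfies Reg(t) ≤ (√3 + 1) · D · sqrt(Σ_{τ=1}^{t} (err_τ − α)²) ≤ (√3 + 1) · D · √t. -/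
/-!
The pinball loss is convex with subgradient `α - err_t` at `ŝ_t`, so the regret against a fixed
`s` is at most the linearised regret `∑ (err_τ - α) (s - ŝ_τ)`. SF-OGD is online gradient descent
on these linear losses with step sizes `η / √G_τ`, `G_τ = ∑_{i ≤ τ} (err_i - α)²`. As the step
sizes decrease, telescoping the distances to `s` bounds the linearised regret by
`(R² / (2η) + η) √G_t` as soon as `|ŝ_τ - s| ≤ R`, using `∑ g_τ² / √G_τ ≤ 2 √G_t`. Each step has
length at most `η` and points towards `S_τ ∈ [0, D]`, so the iterates stay in `[-η, D + η]` and
`R = D + η` works for every `s ∈ [0, D]`; projecting a comparator onto `[0, D]` only lowers its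
loss. For `η = D / √3` the constant is `(√3 + 1) D`.
-/

/-- The `(1-α)`-pinball (quantile) loss `ℓ_{1-α}(S, s)`. -/
noncomputable def pinball (α S s : ℝ) : ℝ := max ((1 - α) * (S - s)) (α * (s - S))

open Finset

theorem pinball_sub_pinball_le (α S x s : ℝ) :
    pinball α S x - pinball α S s ≤ ((if x < S then 1 else 0) - α) * (s - x) := by
  unfold pinball
  split_ifs with h
  · rw [max_eq_left (by nlinarith)]
    nlinarith [le_max_left ((1 - α) * (S - s)) (α * (s - S))]
  · rw [max_eq_right (by nlinarith)]
    nlinarith [le_max_right ((1 - α) * (S - s)) (α * (s - S))]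

theorem pinball_projIcc_le {α S D : ℝ} (hD : 0 ≤ D) (hα : α ∈ Set.Icc 0 1)
    (hS : S ∈ Set.Icc 0 D) (s : ℝ) : pinball α S (Set.projIcc 0 D hD s) ≤ pinball α S s := by
  obtain ⟨hα0, hα1⟩ := hα
  obtain ⟨hS0, hSD⟩ := hS
  unfold pinball
  rcases le_or_gt s 0 with hs | hs
  · rw [Set.projIcc_of_le_left _ hs]
    exact max_le (le_max_of_le_left (by dsimp; nlinarith))
      (le_max_of_le_left (by dsimp; nlinarith))
  rcases le_or_gt D s with hs' | hs'
  · rw [Set.projIcc_of_right_le _ hs']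
    exact max_le (le_max_of_le_right (by dsimp; nlinarith))
      (le_max_of_le_right (by dsimp; nlinarith))
  · rw [Set.projIcc_of_mem _ ⟨hs.le, hs'.le⟩]

theorem div_sqrt_add_le_two_mul_sub {A a : ℝ} (hA : 0 ≤ A) (ha : 0 ≤ a) :
    a / √(A + a) ≤ 2 * (√(A + a) - √A) := by
  rcases (add_nonneg hA ha).eq_or_lt with h | h
  · rw [← h, (add_eq_zero_iff_of_nonneg hA ha).1 h.symm |>.1]
    simp
  have hAa : √A ≤ √(A + a) := Real.sqrt_le_sqrt (by linarith)
  rw [div_le_iff₀ (Real.sqrt_pos.mpr h)]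
  nlinarith [Real.sq_sqrt hA, Real.sq_sqrt h.le, Real.sqrt_nonneg A]

theorem sum_div_sqrt_partialSum_le {a : ℕ → ℝ} (ha : ∀ i, 0 ≤ a i) (n : ℕ) :
    ∑ i ∈ Icc 1 n, a i / √(∑ j ∈ Icc 1 i, a j) ≤ 2 * √(∑ i ∈ Icc 1 n, a i) := by
  induction n with
  | zero => simp
  | succ n ih =>
    rw [sum_Icc_succ_top (by omega), sum_Icc_succ_top (by omega)]
    have := div_sqrt_add_le_two_mul_sub (sum_nonneg fun i (_ : i ∈ Icc 1 n) => ha i) (ha (n + 1))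
    linarith

theorem sum_mul_sub_le_mul_of_monotone {r d d' : ℕ → ℝ} {M : ℝ} {n : ℕ} (hn : 1 ≤ n)
    (hr : Monotone r) (hr1 : 0 ≤ r 1) (hd : ∀ τ ∈ Icc 1 n, d τ ≤ M) (hd' : 0 ≤ d' n)
    (hlink : ∀ τ, 1 ≤ τ → τ < n → d' τ = d (τ + 1)) :
    ∑ τ ∈ Icc 1 n, r τ * (d τ - d' τ) ≤ r n * M := by
  suffices h : ∀ m, 1 ≤ m → m ≤ n → ∑ τ ∈ Icc 1 m, r τ * (d τ - d' τ) + r m * d' m ≤ r m * M by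
    nlinarith [h n hn le_rfl, hr hn]
  intro m hm
  induction m, hm using Nat.le_induction with
  | base =>
    intro h1n
    have := mul_le_mul_of_nonneg_left (hd 1 (mem_Icc.2 ⟨le_rfl, h1n⟩)) hr1
    rw [Icc_self, sum_singleton]
    linarith
  | succ m hm ih =>
    intro hmn
    rw [sum_Icc_succ_top (by omega)]
    have hstep := mul_le_mul_of_nonneg_left (hd (m + 1) (mem_Icc.2 ⟨by omega, hmn⟩))
      (sub_nonneg.2 (hr m.le_succ))
    have := ih (by omega)
    rw [hlink m hm (by omega)] at this
    nlinarith

theorem ogd_sum_mul_sub_le {η R s : ℝ} {x g r : ℕ → ℝ} {n : ℕ} (hη : 0 < η) (hn : 1 ≤ n)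
    (hr : Monotone r) (hr1 : 0 < r 1) (hx : ∀ τ ∈ Icc 1 n, (x τ - s) ^ 2 ≤ R)
    (hrec : ∀ τ, 1 ≤ τ → τ < n → x (τ + 1) = x τ + η * g τ / r τ) :
    ∑ τ ∈ Icc 1 n, g τ * (s - x τ)
      ≤ r n * R / (2 * η) + η / 2 * ∑ τ ∈ Icc 1 n, g τ ^ 2 / r τ := by
  have hpos : ∀ τ ∈ Icc 1 n, 0 < r τ := fun τ hτ => hr1.trans_le (hr (mem_Icc.1 hτ).1)
  -- `g (s - x) = r / (2η) ((x - s)² - (x' - s)²) + η g² / (2r)` with `x' = x + η g / r`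
  calc ∑ τ ∈ Icc 1 n, g τ * (s - x τ)
      = (∑ τ ∈ Icc 1 n, r τ * ((x τ - s) ^ 2 - (x τ + η * g τ / r τ - s) ^ 2)) / (2 * η)
        + η / 2 * ∑ τ ∈ Icc 1 n, g τ ^ 2 / r τ := by
        rw [sum_div, mul_sum, ← sum_add_distrib]
        refine sum_congr rfl fun τ hτ => ?_
        field_simp [(hpos τ hτ).ne']
        ring
    _ ≤ r n * R / (2 * η) + η / 2 * ∑ τ ∈ Icc 1 n, g τ ^ 2 / r τ := by
        gcongr
        exact sum_mul_sub_le_mul_of_monotone hn hr hr1.le hx (sq_nonneg _)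
          fun τ h1 h2 => by rw [hrec τ h1 h2]

theorem scaleFree_ogd_sum_mul_sub_le {η R s : ℝ} {x g : ℕ → ℝ} {n : ℕ} (hη : 0 < η)
    (hn : 1 ≤ n) (hg1 : g 1 ≠ 0) (hx : ∀ τ ∈ Icc 1 n, (x τ - s) ^ 2 ≤ R)
    (hrec : ∀ τ, 1 ≤ τ → τ < n →
      x (τ + 1) = x τ + η * g τ / √(∑ i ∈ Icc 1 τ, g i ^ 2)) :
    ∑ τ ∈ Icc 1 n, g τ * (s - x τ) ≤ (R / (2 * η) + η) * √(∑ τ ∈ Icc 1 n, g τ ^ 2) := by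
  have hmono : Monotone fun τ => √(∑ i ∈ Icc 1 τ, g i ^ 2) := fun m k hmk =>
    Real.sqrt_le_sqrt <| sum_le_sum_of_subset_of_nonneg (Icc_subset_Icc_right hmk)
      fun i _ _ => sq_nonneg (g i)
  have h1 : 0 < √(∑ i ∈ Icc 1 1, g i ^ 2) := by
    rw [Icc_self, sum_singleton]
    positivity
  have hratio := sum_div_sqrt_partialSum_le (fun i => sq_nonneg (g i)) n
  calc ∑ τ ∈ Icc 1 n, g τ * (s - x τ)
      ≤ √(∑ τ ∈ Icc 1 n, g τ ^ 2) * R / (2 * η)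
        + η / 2 * ∑ τ ∈ Icc 1 n, g τ ^ 2 / √(∑ i ∈ Icc 1 τ, g i ^ 2) :=
        ogd_sum_mul_sub_le hη hn hmono h1 hx hrec
    _ ≤ √(∑ τ ∈ Icc 1 n, g τ ^ 2) * R / (2 * η) + η / 2 * (2 * √(∑ τ ∈ Icc 1 n, g τ ^ 2)) := by
        gcongr
    _ = (R / (2 * η) + η) * √(∑ τ ∈ Icc 1 n, g τ ^ 2) := by ring

theorem sfogd_mem_Icc {α η D : ℝ} {T : ℕ} {S x err : ℕ → ℝ} (hα : α ∈ Set.Icc 0 1)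
    (hη : 0 ≤ η) (hS : ∀ t ∈ Icc 1 T, S t ∈ Set.Icc 0 D) (hinit : x 1 ∈ Set.Icc 0 D)
    (herr : ∀ t, 1 ≤ t → t ≤ T → err t = if x t < S t then (1:ℝ) else 0)
    (hrec : ∀ t, 1 ≤ t → t < T →
      x (t + 1) = x t + η * (err t - α) / √(∑ τ ∈ Icc 1 t, (err τ - α) ^ 2)) :
    ∀ t ∈ Icc 1 T, x t ∈ Set.Icc (-η) (D + η) := by
  intro t ht
  obtain ⟨ht1, htT⟩ := mem_Icc.1 ht
  induction t, ht1 using Nat.le_induction with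
  | base => exact ⟨by linarith [hinit.1], by linarith [hinit.2]⟩
  | succ u hu ih =>
    obtain ⟨hx1, hx2⟩ := ih (mem_Icc.2 ⟨hu, by omega⟩) (by omega)
    obtain ⟨hS0, hSD⟩ := hS u (mem_Icc.2 ⟨hu, by omega⟩)
    set r := √(∑ τ ∈ Icc 1 u, (err τ - α) ^ 2)
    have hg : |err u - α| ≤ r := by
      rw [← Real.sqrt_sq_eq_abs]
      exact Real.sqrt_le_sqrt <| single_le_sum (f := fun τ => (err τ - α) ^ 2)
        (fun _ _ => sq_nonneg _) (mem_Icc.2 ⟨hu, le_rfl⟩)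
    have hstep : |η * (err u - α) / r| ≤ η := by
      rw [mul_div_assoc, abs_mul, abs_div, abs_of_nonneg hη, abs_of_nonneg (Real.sqrt_nonneg _)]
      exact mul_le_of_le_one_right hη (div_le_one_of_le₀ hg (Real.sqrt_nonneg _))
    obtain ⟨hstep1, hstep2⟩ := abs_le.1 hstep
    rw [hrec u hu (by omega)]
    rcases lt_or_ge (x u) (S u) with hlt | hge
    · have : 0 ≤ η * (err u - α) / r := by
        rw [herr u hu (by omega), if_pos hlt]
        exact div_nonneg (mul_nonneg hη (by linarith [hα.2])) (Real.sqrt_nonneg _)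
      constructor <;> linarith
    · have : η * (err u - α) / r ≤ 0 := by
        rw [herr u hu (by omega), if_neg hge.not_gt]
        exact div_nonpos_of_nonpos_of_nonneg (mul_nonpos_of_nonneg_of_nonpos hη
          (by linarith [hα.1])) (Real.sqrt_nonneg _)
      constructor <;> linarith

theorem sfogd_sum_pinball_sub_le {α η D s : ℝ} {T t : ℕ} {S x err : ℕ → ℝ}
    (hα : α ∈ Set.Ioo 0 1) (hη : 0 < η) (hS : ∀ t ∈ Icc 1 T, S t ∈ Set.Icc 0 D)
    (hinit : x 1 ∈ Set.Icc 0 D)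
    (herr : ∀ t, 1 ≤ t → t ≤ T → err t = if x t < S t then (1:ℝ) else 0)
    (hrec : ∀ t, 1 ≤ t → t < T →
      x (t + 1) = x t + η * (err t - α) / √(∑ τ ∈ Icc 1 t, (err τ - α) ^ 2))
    (ht : t ∈ Icc 1 T) (hs : s ∈ Set.Icc 0 D) :
    ∑ τ ∈ Icc 1 t, pinball α (S τ) (x τ) - ∑ τ ∈ Icc 1 t, pinball α (S τ) s
      ≤ ((D + η) ^ 2 / (2 * η) + η) * √(∑ τ ∈ Icc 1 t, (err τ - α) ^ 2) := by
  obtain ⟨ht1, htT⟩ := mem_Icc.1 ht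
  have hIcc : ∀ τ ∈ Icc 1 t, 1 ≤ τ ∧ τ ≤ T := fun τ hτ =>
    ⟨(mem_Icc.1 hτ).1, (mem_Icc.1 hτ).2.trans htT⟩
  have hmem := sfogd_mem_Icc (Set.Ioo_subset_Icc_self hα) hη.le hS hinit herr hrec
  calc _ ≤ ∑ τ ∈ Icc 1 t, (err τ - α) * (s - x τ) := by
        rw [← sum_sub_distrib]
        refine sum_le_sum fun τ hτ => ?_
        rw [herr τ (hIcc τ hτ).1 (hIcc τ hτ).2]
        exact pinball_sub_pinball_le α (S τ) (x τ) s
    _ ≤ _ := by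
        refine scaleFree_ogd_sum_mul_sub_le (g := fun τ => err τ - α) hη ht1 ?_
          (fun τ hτ => ?_) fun τ h1 h2 => hrec τ h1 (h2.trans_le htT)
        · rw [herr 1 le_rfl (ht1.trans htT)]
          split_ifs <;> linarith [hα.1, hα.2]
        · obtain ⟨hx1, hx2⟩ := hmem τ (mem_Icc.2 (hIcc τ hτ))
          exact sq_le_sq' (by linarith [hs.2]) (by linarith [hs.1])

/-- Anytime regret bound for SF-OGD with learning rate `η = D/√3` and initialization in
`[0, D]`: for every `t ∈ {1, …, T}`, the regret on the pinball losses is at most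
`(√3 + 1) D sqrt(Σ_{τ≤t} (err_τ - α)²) ≤ (√3 + 1) D √t`. -/
theorem sfogd_anytime_regret (α D : ℝ) (hα : α ∈ Set.Ioo (0:ℝ) 1) (hD : 0 < D)
    (T : ℕ) (S : ℕ → ℝ) (hS : ∀ t ∈ Finset.Icc 1 T, S t ∈ Set.Icc 0 D)
    (shat err : ℕ → ℝ)
    (hinit : shat 1 ∈ Set.Icc 0 D)
    (herr : ∀ t, 1 ≤ t → t ≤ T → err t = if shat t < S t then (1:ℝ) else 0)
    (hrec : ∀ t, 1 ≤ t → t < T →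
      shat (t + 1) = shat t + (D / Real.sqrt 3) * (err t - α) /
        Real.sqrt (∑ τ ∈ Finset.Icc 1 t, (err τ - α) ^ 2)) :
    ∀ t ∈ Finset.Icc 1 T,
      ((∑ τ ∈ Finset.Icc 1 t, pinball α (S τ) (shat τ)) -
          ⨅ s : ℝ, ∑ τ ∈ Finset.Icc 1 t, pinball α (S τ) s)
        ≤ (Real.sqrt 3 + 1) * D * Real.sqrt (∑ τ ∈ Finset.Icc 1 t, (err τ - α) ^ 2)
      ∧ (Real.sqrt 3 + 1) * D * Real.sqrt (∑ τ ∈ Finset.Icc 1 t, (err τ - α) ^ 2)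
        ≤ (Real.sqrt 3 + 1) * D * Real.sqrt t := by
  intro t ht
  have hsub : Icc 1 t ⊆ Icc 1 T := Icc_subset_Icc_right (mem_Icc.1 ht).2
  -- `η = D / √3` minimises `(D + η) ^ 2 / (2 * η) + η`.
  have hconst : (D + D / √3) ^ 2 / (2 * (D / √3)) + D / √3 = (√3 + 1) * D := by
    field_simp
    linear_combination -(Real.sq_sqrt (show (0:ℝ) ≤ 3 by norm_num))
  refine ⟨?_, ?_⟩
  · rw [sub_le_comm, ← hconst]
    refine le_ciInf fun s => ?_
    have := sfogd_sum_pinball_sub_le hα (by positivity) hS hinit herr hrec ht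
      (Set.projIcc 0 D hD.le s).2
    have := sum_le_sum fun τ hτ =>
      pinball_projIcc_le hD.le (Set.Ioo_subset_Icc_self hα) (hS τ (hsub hτ)) s
    linarith
  · gcongr
    calc ∑ τ ∈ Icc 1 t, (err τ - α) ^ 2 ≤ ∑ τ ∈ Icc 1 t, (1 : ℝ) := sum_le_sum fun τ hτ => by
          rw [herr τ (mem_Icc.1 (hsub hτ)).1 (mem_Icc.1 (hsub hτ)).2]
          split_ifs <;> nlinarith [hα.1, hα.2]
      _ = t := by simp
end

section
/- Let T ≥ 1, α ∈ (0, 1], M > 0, and let a_1, …, a_T be real numbers with α ≤ |a_t| ≤ 1 for all t. Suppose that for all integers 0 ≤ t₀ < t_f ≤ T it holds that |Σ_{t=t₀+1}^{t_f} a_t / sqrt(Σ_{s=1}^{t} a_s²)| ≤ M. Then |(1/T) Σ_{t=1}^{T} a_t| ≤ 2 (M + 1 + α^{−2} log T) · T^{−1/4}, where log denotes the natural logarithm. -/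
/-- Grouping lemma: if a sequence `a_t` with `α ≤ |a_t| ≤ 1` has all partial
normalized sums `|Σ_{t=t₀+1}^{t_f} a_t / sqrt(Σ_{s≤t} a_s²)|` bounded by `M`, then the
average `|(1/T) Σ_{t≤T} a_t|` is at most `2 (M + 1 + α⁻² log T) T^{-1/4}`. -/
theorem sqrt_sum_lemma (T : ℕ) (hT : 1 ≤ T) (α M : ℝ)
    (hα : 0 < α) (hα1 : α ≤ 1) (hM : 0 < M)
    (a : ℕ → ℝ) (ha : ∀ t ∈ Finset.Icc 1 T, α ≤ |a t| ∧ |a t| ≤ 1)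
    (hsum : ∀ t₀ t₁ : ℕ, t₀ < t₁ → t₁ ≤ T →
      |∑ t ∈ Finset.Icc (t₀ + 1) t₁, a t / Real.sqrt (∑ s ∈ Finset.Icc 1 t, a s ^ 2)| ≤ M) :
    |(1 / (T:ℝ)) * ∑ t ∈ Finset.Icc 1 T, a t| ≤
      2 * (M + 1 + (1 / α ^ 2) * Real.log T) * (T:ℝ) ^ (-(1/4 : ℝ)) := by
  set b : ℕ → ℝ := fun n => Real.sqrt (∑ s ∈ Finset.Icc 1 n, a s ^ 2) with hb
  set S : ℕ → ℝ := fun n => ∑ t ∈ Finset.Icc 1 n, a t / b t with hS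
  have hbpos : ∀ n, 1 ≤ n → 0 < b n := by
    intro n h1
    apply Real.sqrt_pos.2
    have h1mem : 1 ∈ Finset.Icc 1 n := Finset.mem_Icc.2 ⟨le_refl 1, h1⟩
    have hle : a 1 ^ 2 ≤ ∑ s ∈ Finset.Icc 1 n, a s ^ 2 :=
      Finset.single_le_sum (fun i _ => sq_nonneg (a i)) h1mem
    have ha1 : α ≤ |a 1| := (ha 1 (Finset.mem_Icc.2 ⟨le_refl 1, hT⟩)).1
    nlinarith [sq_abs (a 1), abs_nonneg (a 1)]
  have hbmono : ∀ m n, m ≤ n → b m ≤ b n := by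
    intro m n hmn
    apply Real.sqrt_le_sqrt
    apply Finset.sum_le_sum_of_subset_of_nonneg
    · exact Finset.Icc_subset_Icc_right hmn
    · intro i _ _; exact sq_nonneg (a i)
  have hSM : ∀ n, 1 ≤ n → n ≤ T → |S n| ≤ M := by
    intro n h1 h2
    have := hsum 0 n h1 h2
    simpa [hS, hb] using this
  have key : ∀ n, 1 ≤ n → n ≤ T →
      |(∑ t ∈ Finset.Icc 1 n, a t) - S n * b n| ≤ M * (b n - b 1) := by
    intro n hn
    induction n, hn using Nat.le_induction with
    | base =>
      intro _
      have hb1 : 0 < b 1 := hbpos 1 le_rfl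
      simp [hS, Finset.Icc_self, div_mul_cancel₀ _ (ne_of_gt hb1)]
    | succ n hn IH =>
      intro h2
      have hnT : n ≤ T := le_trans (Nat.le_succ n) h2
      have IH' := IH hnT
      have hbn1 : 0 < b (n + 1) := hbpos (n + 1) (by omega)
      have e1 : ∑ t ∈ Finset.Icc 1 (n + 1), a t = (∑ t ∈ Finset.Icc 1 n, a t) + a (n + 1) :=
        Finset.sum_Icc_succ_top (by omega) _
      have e2 : S (n + 1) = S n + a (n + 1) / b (n + 1) :=
        Finset.sum_Icc_succ_top (by omega) _
      have hS' : |S n| ≤ M := hSM n hn hnT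
      have hbm := hbmono n (n + 1) (Nat.le_succ n)
      have hX : (∑ t ∈ Finset.Icc 1 (n + 1), a t) - S (n + 1) * b (n + 1)
          = ((∑ t ∈ Finset.Icc 1 n, a t) - S n * b n) - S n * (b (n + 1) - b n) := by
        rw [e1, e2]
        field_simp
        ring
      rw [hX]
      have h3 : |((∑ t ∈ Finset.Icc 1 n, a t) - S n * b n) - S n * (b (n + 1) - b n)|
          ≤ |(∑ t ∈ Finset.Icc 1 n, a t) - S n * b n| + |S n * (b (n + 1) - b n)| :=
        abs_sub _ _
      have h4 : |S n * (b (n + 1) - b n)| ≤ M * (b (n + 1) - b n) := by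
        rw [abs_mul, abs_of_nonneg (by linarith : (0:ℝ) ≤ b (n + 1) - b n)]
        exact mul_le_mul_of_nonneg_right hS' (by linarith)
      linarith
  have hST : |S T| ≤ M := hSM T hT le_rfl
  have hkey := key T hT le_rfl
  have hbT : b T ≤ Real.sqrt T := by
    apply Real.sqrt_le_sqrt
    calc ∑ s ∈ Finset.Icc 1 T, a s ^ 2 ≤ ∑ s ∈ Finset.Icc 1 T, 1 := by
          apply Finset.sum_le_sum
          intro i hi
          have h := (ha i hi).2
          nlinarith [sq_abs (a i), abs_nonneg (a i)]
      _ = T := by simp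
  have hb1 : 0 < b 1 := hbpos 1 le_rfl
  have hbT1 : b 1 ≤ b T := hbmono 1 T hT
  have hsumT : |∑ t ∈ Finset.Icc 1 T, a t| ≤ 2 * M * Real.sqrt T := by
    have h1 : |∑ t ∈ Finset.Icc 1 T, a t|
        ≤ |(∑ t ∈ Finset.Icc 1 T, a t) - S T * b T| + |S T * b T| := by
      have h := abs_add_le ((∑ t ∈ Finset.Icc 1 T, a t) - S T * b T) (S T * b T)
      rwa [sub_add_cancel] at h
    have h2 : |S T * b T| ≤ M * b T := by
      rw [abs_mul, abs_of_nonneg (le_of_lt (hbpos T hT))]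
      exact mul_le_mul_of_nonneg_right hST (le_of_lt (hbpos T hT))
    have h3 : 0 < Real.sqrt T := lt_of_lt_of_le (lt_of_lt_of_le hb1 hbT1) hbT
    nlinarith
  -- final numeric estimates
  have hTpos : (0:ℝ) < T := by positivity
  have hT1 : (1:ℝ) ≤ T := by exact_mod_cast hT
  have hlog : 0 ≤ Real.log T := Real.log_nonneg hT1
  have hc : 0 ≤ (1 / α ^ 2) * Real.log T := mul_nonneg (by positivity) hlog
  have hrpos : 0 < (T:ℝ) ^ (-(1/4 : ℝ)) := Real.rpow_pos_of_pos hTpos _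
  have hmain : |(1 / (T:ℝ)) * ∑ t ∈ Finset.Icc 1 T, a t| ≤ 2 * M * ((T:ℝ) ^ (-(1/2 : ℝ))) := by
    rw [abs_mul, abs_of_nonneg (by positivity : (0:ℝ) ≤ 1 / (T:ℝ))]
    have heq : (1 / (T:ℝ)) * (2 * M * Real.sqrt T) = 2 * M * ((T:ℝ) ^ (-(1/2 : ℝ))) := by
      rw [Real.sqrt_eq_rpow]
      rw [show (1 / (T:ℝ)) = (T:ℝ) ^ (-(1:ℝ)) by
        rw [Real.rpow_neg_one]; exact one_div _]
      have : (T:ℝ) ^ (-(1:ℝ)) * (T:ℝ) ^ ((1:ℝ)/2) = (T:ℝ) ^ (-(1:ℝ) + (1:ℝ)/2) :=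
        (Real.rpow_add hTpos _ _).symm
      rw [mul_comm (2*M), ← mul_assoc, this]
      norm_num
      ring
    calc (1 / (T:ℝ)) * |∑ t ∈ Finset.Icc 1 T, a t|
        ≤ (1 / (T:ℝ)) * (2 * M * Real.sqrt T) :=
          mul_le_mul_of_nonneg_left hsumT (by positivity)
      _ = 2 * M * ((T:ℝ) ^ (-(1/2 : ℝ))) := heq
  have hr : (T:ℝ) ^ (-(1/2 : ℝ)) ≤ (T:ℝ) ^ (-(1/4 : ℝ)) :=
    Real.rpow_le_rpow_of_exponent_le hT1 (by norm_num)
  calc |(1 / (T:ℝ)) * ∑ t ∈ Finset.Icc 1 T, a t|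
      ≤ 2 * M * ((T:ℝ) ^ (-(1/2 : ℝ))) := hmain
    _ ≤ 2 * M * ((T:ℝ) ^ (-(1/4 : ℝ))) := by
        apply mul_le_mul_of_nonneg_left hr (by positivity)
    _ ≤ 2 * (M + 1 + (1 / α ^ 2) * Real.log T) * (T:ℝ) ^ (-(1/4 : ℝ)) := by
        apply mul_le_mul_of_nonneg_right _ (le_of_lt hrpos)
        linarith
end

section
/- (Coverage bound for SF-OGD.) Let α ∈ (0,1), D > 0, η > 0, and let S_1, …, S_T ∈ [0, D]. Run SF-OGD with learning rate η and initialization ŝ_1 ∈ [0, D], producing iterates ŝ_t and miscoverage indicators err_t = 1{ŝ_t < S_t}. Then for every T ≥ 1, the empirical coverage error satisfies |(1/T) Σ_{t=1}^{T} err_t − α| ≤ 2 ((D + 3η)/η + α^{−2} log T) · T^{−1/4}, where log denotes the natural logarithm. In particular, for any η = Θ(D) the coverage error is O(α^{−2} T^{−1/4} log T). -/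
/-- Coverage bound for SF-OGD: running Scale-Free OGD on the pinball loss with learning
rate `η` and initialization in `[0, D]`, the empirical coverage error satisfies
`|(1/T) Σ_{t≤T} err_t - α| ≤ 2 ((D + 3η)/η + α⁻² log T) T^{-1/4}`. -/
theorem sfogd_coverage (α D η : ℝ) (hα : α ∈ Set.Ioo (0:ℝ) 1)
    (hD : 0 < D) (hη : 0 < η) (T : ℕ) (hT : 1 ≤ T)
    (S : ℕ → ℝ) (hS : ∀ t ∈ Finset.Icc 1 T, S t ∈ Set.Icc 0 D)
    (shat err : ℕ → ℝ)
    (hinit : shat 1 ∈ Set.Icc 0 D)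
    (herr : ∀ t, 1 ≤ t → t ≤ T → err t = if shat t < S t then (1:ℝ) else 0)
    (hrec : ∀ t, 1 ≤ t → t < T →
      shat (t + 1) = shat t + η * (err t - α) /
        Real.sqrt (∑ τ ∈ Finset.Icc 1 t, (err τ - α) ^ 2)) :
    |(1 / (T:ℝ)) * (∑ t ∈ Finset.Icc 1 T, err t) - α| ≤
      2 * ((D + 3 * η) / η + (1 / α ^ 2) * Real.log T) * (T:ℝ) ^ (-(1/4 : ℝ)) := by
  obtain ⟨hα0, hα1⟩ := hα
  obtain ⟨n, rfl⟩ : ∃ n, T = n + 1 := ⟨T - 1, by omega⟩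
  set T := n + 1 with hTdef
  have hT1 : (1:ℝ) ≤ (T:ℝ) := by exact_mod_cast hT
  have hT0 : (0:ℝ) < (T:ℝ) := lt_of_lt_of_le one_pos hT1
  set g : ℕ → ℝ := fun t => err t - α with hg
  set V : ℕ → ℝ := fun t => ∑ τ ∈ Finset.Icc 1 t, g τ ^ 2 with hV
  set a : ℕ → ℝ := fun t => Real.sqrt (V t) with ha
  -- err is 0 or 1
  have herr' : ∀ t, 1 ≤ t → t ≤ T → err t = 0 ∨ err t = 1 := by
    intro t h1 h2
    rw [herr t h1 h2]
    split <;> simp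
  have hgsq_pos : ∀ t, 1 ≤ t → t ≤ T → 0 < g t ^ 2 := by
    intro t h1 h2
    rcases herr' t h1 h2 with h | h <;> simp only [hg, h] <;> nlinarith
  have hgsq_le : ∀ t, 1 ≤ t → t ≤ T → g t ^ 2 ≤ 1 := by
    intro t h1 h2
    rcases herr' t h1 h2 with h | h <;> simp only [hg, h] <;> nlinarith
  have hVmono : ∀ s t : ℕ, s ≤ t → V s ≤ V t := by
    intro s t hst
    apply Finset.sum_le_sum_of_subset_of_nonneg (Finset.Icc_subset_Icc_right hst)
    intro i _ _
    positivity
  have hVpos : ∀ t, 1 ≤ t → t ≤ T → 0 < V t := by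
    intro t h1 h2
    have h3 : V 1 ≤ V t := hVmono 1 t h1
    have h4 : V 1 = g 1 ^ 2 := by simp [hV]
    have := hgsq_pos 1 le_rfl (by omega)
    linarith
  have hapos : ∀ t, 1 ≤ t → t ≤ T → 0 < a t := by
    intro t h1 h2
    exact Real.sqrt_pos.2 (hVpos t h1 h2)
  have hanonneg : ∀ t, 0 ≤ a t := fun t => Real.sqrt_nonneg _
  have hamono : ∀ s t : ℕ, s ≤ t → a s ≤ a t := fun s t hst =>
    Real.sqrt_le_sqrt (hVmono s t hst)
  have hga : ∀ t, 1 ≤ t → t ≤ T → |g t| ≤ a t := by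
    intro t h1 h2
    have h3 : g t ^ 2 ≤ V t := by
      apply Finset.single_le_sum (f := fun τ => g τ ^ 2)
      · intro i _; positivity
      · exact Finset.mem_Icc.2 ⟨h1, le_rfl⟩
    calc |g t| = Real.sqrt (g t ^ 2) := by rw [Real.sqrt_sq_eq_abs]
    _ ≤ a t := Real.sqrt_le_sqrt h3
  have hstep : ∀ t, 1 ≤ t → t ≤ T → |g t / a t| ≤ 1 := by
    intro t h1 h2
    rw [abs_div, abs_of_pos (hapos t h1 h2), div_le_one (hapos t h1 h2)]
    exact hga t h1 h2
  -- boundedness of iterates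
  have hbound : ∀ t, 1 ≤ t → t ≤ T → -η ≤ shat t ∧ shat t ≤ D + η := by
    intro t ht1
    induction t, ht1 using Nat.le_induction with
    | base => intro _; exact ⟨by linarith [hinit.1], by linarith [hinit.2]⟩
    | succ m hm ih =>
      intro hmT
      have hmT' : m ≤ T := by omega
      have hmlt : m < T := by omega
      obtain ⟨ih1, ih2⟩ := ih hmT'
      have heq : shat (m+1) = shat m + η * g m / a m := hrec m hm hmlt
      have hstepabs : |η * g m / a m| ≤ η := by
        rw [mul_div_assoc, abs_mul, abs_of_pos hη]
        calc η * |g m / a m| ≤ η * 1 :=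
          mul_le_mul_of_nonneg_left (hstep m hm hmT') hη.le
        _ = η := mul_one η
      have habs := abs_le.1 hstepabs
      have hSm := hS m (Finset.mem_Icc.2 ⟨hm, hmT'⟩)
      constructor
      · -- lower bound
        by_cases hc : 0 ≤ shat m
        · rw [heq]; linarith [habs.1]
        · push_neg at hc
          have herrm : err m = 1 := by
            rw [herr m hm hmT', if_pos (lt_of_lt_of_le hc hSm.1)]
          have hgm : g m = 1 - α := by simp [hg, herrm]
          have hpos : 0 ≤ η * g m / a m := by
            apply div_nonneg _ (hanonneg m)
            rw [hgm]; nlinarith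
          rw [heq]; linarith
      · -- upper bound
        by_cases hc : shat m ≤ D
        · rw [heq]; linarith [habs.2]
        · push_neg at hc
          have herrm : err m = 0 := by
            rw [herr m hm hmT', if_neg (not_lt.2 (le_of_lt (lt_of_le_of_lt hSm.2 hc)))]
          have hgm : g m = -α := by simp [hg, herrm]
          have hneg : η * g m / a m ≤ 0 := by
            apply div_nonpos_of_nonpos_of_nonneg _ (hanonneg m)
            rw [hgm]; nlinarith
          rw [heq]; linarith
  -- telescoping
  have htel : ∀ k, 1 ≤ k → k ≤ T →
      shat k = shat 1 + η * ∑ t ∈ Finset.Ico 1 k, (g t / a t) := by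
    intro k hk1
    induction k, hk1 using Nat.le_induction with
    | base => intro _; simp
    | succ m hm ih =>
      intro hmT
      have hmT' : m ≤ T := by omega
      have hmlt : m < T := by omega
      have heq : shat (m+1) = shat m + η * g m / a m := hrec m hm hmlt
      rw [heq, ih hmT', Finset.sum_Ico_succ_top hm]
      ring
  -- reindexing helper
  have hreidx : ∀ (f : ℕ → ℝ) (m : ℕ),
      ∑ j ∈ Finset.range m, f (j+1) = ∑ t ∈ Finset.Ico 1 (m+1), f t := by
    intro f m
    rw [Finset.sum_Ico_eq_sum_range]
    simp only [Nat.add_sub_cancel]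
    exact Finset.sum_congr rfl fun i _ => by rw [Nat.add_comm]
  -- partial sum bounds
  have hC2 : (0:ℝ) ≤ (D + 2*η)/η := by positivity
  have hP : ∀ m, m ≤ n → |∑ j ∈ Finset.range m, g (j+1) / a (j+1)| ≤ (D + 2*η)/η := by
    intro m hmn
    rw [hreidx (fun t => g t / a t) m]
    have h2 := htel (m+1) (by omega) (by omega)
    have hb1 := hbound 1 le_rfl (by omega)
    have hb2 := hbound (m+1) (by omega) (by omega)
    rw [le_div_iff₀ hη]
    have key : η * ∑ t ∈ Finset.Ico 1 (m+1), (g t / a t) = shat (m+1) - shat 1 := by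
      linarith
    calc |∑ t ∈ Finset.Ico 1 (m+1), g t / a t| * η
        = |η * ∑ t ∈ Finset.Ico 1 (m+1), (g t / a t)| := by
          rw [abs_mul, abs_of_pos hη]; ring
      _ = |shat (m+1) - shat 1| := by rw [key]
      _ ≤ D + 2*η := by
          rw [abs_sub_le_iff]
          constructor <;> linarith [hb1.1, hb1.2, hb2.1, hb2.2]
  -- summation by parts
  have habel := Finset.sum_range_by_parts (fun i => a (i+1)) (fun i => g (i+1) / a (i+1)) T
  simp only [smul_eq_mul, hTdef, Nat.add_sub_cancel] at habel
  have hlhs : ∑ i ∈ Finset.range (n+1), a (i+1) * (g (i+1) / a (i+1))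
      = ∑ i ∈ Finset.range (n+1), g (i+1) := by
    apply Finset.sum_congr rfl
    intro i hi
    have hi' : i + 1 ≤ T := by
      have := Finset.mem_range.1 hi; omega
    rw [mul_comm, div_mul_cancel₀ _ (hapos (i+1) (by omega) hi').ne']
  have hsqT : a T ≤ Real.sqrt T := by
    apply Real.sqrt_le_sqrt
    calc V T ≤ ∑ τ ∈ Finset.Icc 1 T, (1:ℝ) := by
          apply Finset.sum_le_sum
          intro i hi
          obtain ⟨h1, h2⟩ := Finset.mem_Icc.1 hi
          exact hgsq_le i h1 h2
      _ = (T:ℝ) := by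
          rw [Finset.sum_const, Nat.card_Icc]
          simp
  -- bound on the second by-parts term
  have hterm2 : |∑ i ∈ Finset.range n, (a (i+1+1) - a (i+1)) * ∑ j ∈ Finset.range (i+1), g (j+1) / a (j+1)|
      ≤ (a (n+1) - a 1) * ((D + 2*η)/η) := by
    calc |∑ i ∈ Finset.range n, (a (i+1+1) - a (i+1)) * ∑ j ∈ Finset.range (i+1), g (j+1) / a (j+1)|
        ≤ ∑ i ∈ Finset.range n, |(a (i+1+1) - a (i+1)) * ∑ j ∈ Finset.range (i+1), g (j+1) / a (j+1)| :=
          Finset.abs_sum_le_sum_abs _ _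
      _ ≤ ∑ i ∈ Finset.range n, (a (i+1+1) - a (i+1)) * ((D + 2*η)/η) := by
          apply Finset.sum_le_sum
          intro i hi
          have hin : i < n := Finset.mem_range.1 hi
          rw [abs_mul, abs_of_nonneg (by linarith [hamono (i+1) (i+1+1) (by omega)])]
          exact mul_le_mul_of_nonneg_left (hP (i+1) (by omega))
            (by linarith [hamono (i+1) (i+1+1) (by omega)])
      _ = (a (n+1) - a 1) * ((D + 2*η)/η) := by
          rw [← Finset.sum_mul, Finset.sum_range_sub (fun i => a (i+1)) n]
  -- bound on full partial sum
  have hBT : |∑ i ∈ Finset.range (n+1), g (i+1) / a (i+1)| ≤ (D + 3*η)/η := by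
    rw [Finset.sum_range_succ]
    have h1 := hP n le_rfl
    have h2 := hstep (n+1) (by omega) le_rfl
    have h3 : (D + 3*η)/η = (D + 2*η)/η + 1 := by field_simp; ring
    calc |∑ j ∈ Finset.range n, g (j+1) / a (j+1) + g (n+1) / a (n+1)|
        ≤ |∑ j ∈ Finset.range n, g (j+1) / a (j+1)| + |g (n+1) / a (n+1)| := abs_add_le _ _
      _ ≤ (D + 2*η)/η + 1 := add_le_add h1 h2
      _ = (D + 3*η)/η := h3.symm
  -- main sum bound
  have hsumIcc : ∑ t ∈ Finset.Icc 1 T, g t = ∑ i ∈ Finset.range (n+1), g (i+1) := by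
    rw [hreidx g (n+1), hTdef, Finset.Ico_add_one_right_eq_Icc]
  have hC3 : (0:ℝ) ≤ (D + 3*η)/η := by positivity
  have hC23 : (D + 2*η)/η ≤ (D + 3*η)/η := by gcongr <;> linarith
  have hmain : |∑ t ∈ Finset.Icc 1 T, g t| ≤ 2 * ((D + 3*η)/η) * Real.sqrt T := by
    rw [hsumIcc, ← hlhs, habel]
    have haT := hsqT
    have ha1 := hanonneg 1
    have hsq0 : (0:ℝ) ≤ Real.sqrt T := Real.sqrt_nonneg _
    calc |a (n+1) * ∑ i ∈ Finset.range (n+1), g (i+1) / a (i+1) -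
          ∑ i ∈ Finset.range n, (a (i+1+1) - a (i+1)) * ∑ j ∈ Finset.range (i+1), g (j+1) / a (j+1)|
        ≤ |a (n+1) * ∑ i ∈ Finset.range (n+1), g (i+1) / a (i+1)| +
          |∑ i ∈ Finset.range n, (a (i+1+1) - a (i+1)) * ∑ j ∈ Finset.range (i+1), g (j+1) / a (j+1)| :=
          abs_sub _ _
      _ ≤ a (n+1) * ((D + 3*η)/η) + (a (n+1) - a 1) * ((D + 2*η)/η) := by
          apply add_le_add _ hterm2
          rw [abs_mul, abs_of_nonneg (hanonneg (n+1))]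
          exact mul_le_mul_of_nonneg_left hBT (hanonneg (n+1))
      _ ≤ 2 * ((D + 3*η)/η) * Real.sqrt T := by
          have haTn : a (n+1) ≤ Real.sqrt T := haT
          nlinarith [hanonneg (n+1)]
  -- rewrite the goal
  have hcard : (Finset.Icc 1 T).card = T := by rw [Nat.card_Icc]; omega
  have hsplit : ∑ t ∈ Finset.Icc 1 T, g t = (∑ t ∈ Finset.Icc 1 T, err t) - T * α := by
    simp only [hg]
    rw [Finset.sum_sub_distrib, Finset.sum_const, hcard]
    simp [mul_comm]
  have hgoal_eq : (1 / (T:ℝ)) * (∑ t ∈ Finset.Icc 1 T, err t) - α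
      = (1 / (T:ℝ)) * ∑ t ∈ Finset.Icc 1 T, g t := by
    rw [hsplit]
    field_simp
  -- rpow arithmetic
  have hsqrt_div : Real.sqrt T / T ≤ (T:ℝ) ^ (-(1/4:ℝ)) := by
    have h1 : (T:ℝ) ^ (-(1/2:ℝ)) * T = Real.sqrt T := by
      rw [Real.sqrt_eq_rpow, ← Real.rpow_add_one hT0.ne']
      norm_num
    rw [← h1, mul_div_assoc, div_self hT0.ne', mul_one]
    exact Real.rpow_le_rpow_of_exponent_le hT1 (by norm_num)
  have hlog : (0:ℝ) ≤ (1 / α ^ 2) * Real.log T :=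
    mul_nonneg (by positivity) (Real.log_nonneg hT1)
  have hrpow0 : (0:ℝ) ≤ (T:ℝ) ^ (-(1/4:ℝ)) := Real.rpow_nonneg hT0.le _
  calc |(1 / (T:ℝ)) * (∑ t ∈ Finset.Icc 1 T, err t) - α|
      = |∑ t ∈ Finset.Icc 1 T, g t| / T := by
        rw [hgoal_eq, abs_mul, abs_of_pos (by positivity : (0:ℝ) < 1 / (T:ℝ))]
        ring
    _ ≤ (2 * ((D + 3*η)/η) * Real.sqrt T) / T := by
        gcongr
    _ = 2 * ((D + 3*η)/η) * (Real.sqrt T / T) := by ring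
    _ ≤ 2 * ((D + 3*η)/η) * ((T:ℝ) ^ (-(1/4:ℝ))) := by
        apply mul_le_mul_of_nonneg_left hsqrt_div (by positivity)
    _ ≤ 2 * ((D + 3 * η) / η + (1 / α ^ 2) * Real.log T) * (T:ℝ) ^ (-(1/4 : ℝ)) := by
        apply mul_le_mul_of_nonneg_right _ hrpow0
        linarith
end

section
/- (Per-group coverage bound for expert aggregation over SF-OGD experts.) Let α ∈ (0,1), D > 0, η = D/√3, T ≥ 1, and S_1, …, S_T ∈ [0, D]. For each i ∈ {1, …, T}, let expert i run SF-OGD from time i through time T: choose ŝ_{i,i} ∈ [−η, D+η] and set, for i ≤ t ≤ T, err_{t,i} := 1{ŝ_{i,t} < S_t} and ŝ_{i,t+1} := ŝ_{i,t} + η (err_{t,i} − α)/G^i_{i:t}, where G^i_{i:t} := sqrt(Σ_{τ=i}^{t} (err_{τ,i} − α)²). For each t let p_{t,·} = (p_{t,1}, …, p_{t,t}) be an arbitrary probability vector, and set ẽrr_t := Σ_{i=1}^{t} p_{t,i} err_{t,i}. Then for all integers 1 ≤ t₀ < t₁ ≤ T (setting p_{t₀,i} := 0 for i > t₀): |Σ_{t=t₀+1}^{t₁}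 (ẽrr_t − α)| ≤ (2 + √3) √T + (t₁ − t₀) · max_{t₀ < t ≤ t₁} Σ_{i=1}^{t} | p_{t,i} − p_{t₀,i} · G^i_{i:t₀} / G^i_{i:t} |. -/
private lemma telescope_Icc (f : ℕ → ℝ) (a : ℕ) : ∀ b : ℕ, a ≤ b + 1 →
    ∑ t ∈ Finset.Icc a b, (f (t + 1) - f t) = f (b + 1) - f a := by
  intro b
  induction b with
  | zero =>
    intro h
    interval_cases a <;> simp
  | succ b ih =>
    intro h
    rcases Nat.lt_or_ge b.succ a with h2 | h2
    · have ha : a = b + 2 := by omega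
      subst ha
      simp
    · rw [Finset.sum_Icc_succ_top h2, ih (by omega)]
      ring

/-- Per-group coverage bound for arbitrary probability aggregation of SF-OGD experts:
for each `i`, expert `i` runs SF-OGD (learning rate `η = D/√3`) from time `i`;
`p t` is an arbitrary probability vector over `{1, …, t}` and
`ẽrr_t = Σ_i p_{t,i} err_{t,i}`. Then for all `1 ≤ t₀ < t₁ ≤ T`,
`|Σ_{t=t₀+1}^{t₁} (ẽrr_t - α)| ≤ (2 + √3) √T + (t₁ - t₀) max_{t₀ < t ≤ t₁}
Σ_{i≤t} |p_{t,i} - p_{t₀,i} G^i_{i:t₀} / G^i_{i:t}|`. -/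
theorem expert_aggregation_coverage (α D : ℝ) (hα : α ∈ Set.Ioo (0:ℝ) 1) (hD : 0 < D)
    (T : ℕ) (hT : 1 ≤ T) (S : ℕ → ℝ) (hS : ∀ t ∈ Finset.Icc 1 T, S t ∈ Set.Icc 0 D)
    (sexp errE : ℕ → ℕ → ℝ)
    (hinit : ∀ i, 1 ≤ i → i ≤ T →
      sexp i i ∈ Set.Icc (-(D / Real.sqrt 3)) (D + D / Real.sqrt 3))
    (herr : ∀ i t, 1 ≤ i → i ≤ t → t ≤ T →
      errE i t = if sexp i t < S t then (1:ℝ) else 0)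
    (hrec : ∀ i t, 1 ≤ i → i ≤ t → t < T →
      sexp i (t + 1) = sexp i t + (D / Real.sqrt 3) * (errE i t - α) /
        Real.sqrt (∑ τ ∈ Finset.Icc i t, (errE i τ - α) ^ 2))
    (p : ℕ → ℕ → ℝ)
    (hp_zero : ∀ t i, t < i → p t i = 0)
    (hp_nonneg : ∀ t i, 0 ≤ p t i)
    (hp_sum : ∀ t, 1 ≤ t → t ≤ T → ∑ i ∈ Finset.Icc 1 t, p t i = 1) :
    ∀ t₀ t₁ : ℕ, 1 ≤ t₀ → ∀ h01 : t₀ < t₁, t₁ ≤ T →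
      |∑ t ∈ Finset.Icc (t₀ + 1) t₁,
          ((∑ i ∈ Finset.Icc 1 t, p t i * errE i t) - α)|
        ≤ (2 + Real.sqrt 3) * Real.sqrt T
          + ((t₁ : ℝ) - (t₀ : ℝ)) *
            (Finset.Icc (t₀ + 1) t₁).sup' (Finset.nonempty_Icc.mpr (by omega))
              (fun t => ∑ i ∈ Finset.Icc 1 t,
                |p t i - p t₀ i *
                  Real.sqrt (∑ τ ∈ Finset.Icc i t₀, (errE i τ - α) ^ 2) /
                  Real.sqrt (∑ τ ∈ Finset.Icc i t, (errE i τ - α) ^ 2)|) := by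
  intro t₀ t₁ ht₀ h01 ht₁
  obtain ⟨hα0, hα1⟩ := hα
  have h3 : (0:ℝ) < Real.sqrt 3 := Real.sqrt_pos.mpr (by norm_num)
  set η : ℝ := D / Real.sqrt 3 with hηdef
  have hη : 0 < η := div_pos hD h3
  set G : ℕ → ℕ → ℝ := fun i t => Real.sqrt (∑ τ ∈ Finset.Icc i t, (errE i τ - α) ^ 2)
    with hGdef
  have hGeq : ∀ i t : ℕ, Real.sqrt (∑ τ ∈ Finset.Icc i t, (errE i τ - α) ^ 2) = G i t :=
    fun _ _ => rfl
  -- basic facts about errE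
  have herr01 : ∀ i t, 1 ≤ i → i ≤ t → t ≤ T → errE i t = 0 ∨ errE i t = 1 := by
    intro i t h1 h2 h3'
    rw [herr i t h1 h2 h3']
    split <;> simp
  have herrabs : ∀ i t, 1 ≤ i → i ≤ t → t ≤ T → |errE i t - α| ≤ 1 := by
    intro i t h1 h2 h3'
    rcases herr01 i t h1 h2 h3' with h | h <;> rw [h, abs_le] <;> constructor <;> linarith
  have herrsq : ∀ i t, 1 ≤ i → i ≤ t → t ≤ T → (errE i t - α) ^ 2 ≤ 1 := by
    intro i t h1 h2 h3'
    have := herrabs i t h1 h2 h3'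
    nlinarith [abs_nonneg (errE i t - α), sq_abs (errE i t - α)]
  have herrposn : ∀ i t, 1 ≤ i → i ≤ t → t ≤ T → 0 < (errE i t - α) ^ 2 := by
    intro i t h1 h2 h3'
    rcases herr01 i t h1 h2 h3' with h | h <;> rw [h] <;> nlinarith
  have hGpos : ∀ i t, 1 ≤ i → i ≤ t → t ≤ T → 0 < G i t := by
    intro i t h1 h2 h3'
    apply Real.sqrt_pos.mpr
    apply Finset.sum_pos'
    · intro τ _; positivity
    · exact ⟨t, Finset.mem_Icc.mpr ⟨h2, le_refl t⟩, herrposn i t h1 h2 h3'⟩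
  have hGge : ∀ i t, 1 ≤ i → i ≤ t → t ≤ T → |errE i t - α| ≤ G i t := by
    intro i t h1 h2 h3'
    rw [← Real.sqrt_sq_eq_abs]
    apply Real.sqrt_le_sqrt
    exact Finset.single_le_sum (f := fun τ => (errE i τ - α) ^ 2)
      (fun τ _ => by positivity) (Finset.mem_Icc.mpr ⟨h2, le_refl t⟩)
  -- step bound
  have hstep : ∀ i t, 1 ≤ i → i ≤ t → t ≤ T → |η * (errE i t - α) / G i t| ≤ η := by
    intro i t h1 h2 h3'
    have hg := hGpos i t h1 h2 h3'
    rw [abs_div, abs_mul, abs_of_pos hη, abs_of_pos hg, div_le_iff₀ hg]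
    have := hGge i t h1 h2 h3'
    nlinarith
  -- extended iterates
  set s' : ℕ → ℕ → ℝ := fun i t =>
    if t ≤ T then sexp i t else sexp i T + η * (errE i T - α) / G i T with hs'def
  have hrec' : ∀ i t, 1 ≤ i → i ≤ t → t ≤ T →
      s' i (t + 1) = s' i t + η * (errE i t - α) / G i t := by
    intro i t h1 h2 h3'
    rcases Nat.lt_or_ge t T with h | h
    · have h4 : t + 1 ≤ T := h
      simp only [hs'def, if_pos h4, if_pos h3']
      exact hrec i t h1 h2 h
    · have hTt : t = T := le_antisymm h3' h
      subst hTt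
      simp only [hs'def, if_neg (by omega : ¬ t + 1 ≤ t), if_pos le_rfl]
  have hs'T : ∀ i t, t ≤ T → s' i t = sexp i t := by
    intro i t h; simp only [hs'def, if_pos h]
  -- boundedness by induction
  have hbound : ∀ i, 1 ≤ i → i ≤ T → ∀ t, i ≤ t → t ≤ T + 1 →
      -η ≤ s' i t ∧ s' i t ≤ D + η := by
    intro i hi1 hiT t
    induction t with
    | zero => intro h _; omega
    | succ t ih =>
      intro hit htT
      rcases Nat.lt_or_ge i (t + 1) with hlt | hge
      · have hit' : i ≤ t := by omega
        have htT' : t ≤ T := by omega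
        obtain ⟨ihl, ihu⟩ := ih hit' (by omega)
        have hre := hrec' i t hi1 hit' htT'
        have hst := hstep i t hi1 hit' htT'
        have hstl : -η ≤ η * (errE i t - α) / G i t := neg_le_of_abs_le hst
        have hstu : η * (errE i t - α) / G i t ≤ η := le_of_abs_le hst
        have hSt := hS t (Finset.mem_Icc.mpr ⟨by omega, htT'⟩)
        obtain ⟨hS0, hSD⟩ := hSt
        have hg := hGpos i t hi1 hit' htT'
        have hse : s' i t = sexp i t := hs'T i t htT'
        rw [herr i t hi1 hit' htT'] at hre
        by_cases hc : sexp i t < S t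
        · rw [if_pos hc] at hre
          have hsgn : 0 ≤ η * ((1:ℝ) - α) / G i t :=
            div_nonneg (by nlinarith) (le_of_lt hg)
          have hstu' : η * ((1:ℝ) - α) / G i t ≤ η := by
            rw [herr i t hi1 hit' htT', if_pos hc] at hstu; exact hstu
          constructor <;> [linarith [hre, hse]; linarith [hre, hse]]
        · rw [if_neg hc] at hre
          push_neg at hc
          have hsgn : η * ((0:ℝ) - α) / G i t ≤ 0 := by
            apply div_nonpos_of_nonpos_of_nonneg
            · nlinarith
            · linarith
          have hstl' : -η ≤ η * ((0:ℝ) - α) / G i t := by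
            rw [herr i t hi1 hit' htT', if_neg (not_lt.mpr hc)] at hstl; exact hstl
          constructor <;> [linarith [hre, hse]; linarith [hre, hse]]
      · have hie : i = t + 1 := by omega
        rw [← hie, hs'T i i (by omega)]
        have := hinit i hi1 hiT
        exact ⟨this.1, this.2⟩
  -- telescoping
  have htel : ∀ i, 1 ≤ i → i ≤ t₀ →
      ∑ t ∈ Finset.Icc (t₀ + 1) t₁, (errE i t - α) / G i t
        = (s' i (t₁ + 1) - s' i (t₀ + 1)) / η := by
    intro i h1 h2
    have : ∑ t ∈ Finset.Icc (t₀ + 1) t₁, (errE i t - α) / G i t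
        = ∑ t ∈ Finset.Icc (t₀ + 1) t₁, ((s' i (t + 1) - s' i t) / η) := by
      apply Finset.sum_congr rfl
      intro t ht
      rw [Finset.mem_Icc] at ht
      have hre := hrec' i t h1 (by omega) (by omega)
      have hgne : G i t ≠ 0 := ne_of_gt (hGpos i t h1 (by omega) (by omega))
      rw [hre]
      field_simp
      ring
    rw [this, ← Finset.sum_div, telescope_Icc (fun t => s' i t) (t₀ + 1) t₁ (by omega)]
  -- G at t₀ is at most sqrt T
  have hGle : ∀ i, 1 ≤ i → i ≤ t₀ → G i t₀ ≤ Real.sqrt T := by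
    intro i h1 h2
    apply Real.sqrt_le_sqrt
    calc ∑ τ ∈ Finset.Icc i t₀, (errE i τ - α) ^ 2
        ≤ ∑ τ ∈ Finset.Icc i t₀, (1:ℝ) := by
          apply Finset.sum_le_sum
          intro τ hτ
          rw [Finset.mem_Icc] at hτ
          exact herrsq i τ h1 hτ.1 (by omega)
      _ = ((t₀ + 1 - i : ℕ) : ℝ) := by simp [Nat.card_Icc]
      _ ≤ (T : ℝ) := Nat.cast_le.mpr (by omega)
  have hD2η : D + 2 * η = (2 + Real.sqrt 3) * η := by
    rw [hηdef]
    field_simp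
    ring
  have hdiffb : ∀ i, 1 ≤ i → i ≤ t₀ → |s' i (t₁ + 1) - s' i (t₀ + 1)| ≤ D + 2 * η := by
    intro i h1 h2
    have hA := hbound i h1 (by omega) (t₁ + 1) (by omega) (by omega)
    have hB := hbound i h1 (by omega) (t₀ + 1) (by omega) (by omega)
    rw [abs_le]
    constructor <;> [linarith [hA.1, hB.2]; linarith [hA.2, hB.1]]
  -- decomposition
  have key : ∑ t ∈ Finset.Icc (t₀ + 1) t₁, ((∑ i ∈ Finset.Icc 1 t, p t i * errE i t) - α)
      = (∑ i ∈ Finset.Icc 1 t₀, p t₀ i * G i t₀ * ((s' i (t₁ + 1) - s' i (t₀ + 1)) / η))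
        + ∑ t ∈ Finset.Icc (t₀ + 1) t₁, ∑ i ∈ Finset.Icc 1 t,
            (p t i - p t₀ i * G i t₀ / G i t) * (errE i t - α) := by
    have step1 : ∀ t ∈ Finset.Icc (t₀ + 1) t₁,
        (∑ i ∈ Finset.Icc 1 t, p t i * errE i t) - α
        = (∑ i ∈ Finset.Icc 1 t₀, p t₀ i * G i t₀ / G i t * (errE i t - α))
          + ∑ i ∈ Finset.Icc 1 t, (p t i - p t₀ i * G i t₀ / G i t) * (errE i t - α) := by
      intro t ht
      rw [Finset.mem_Icc] at ht
      have hsum := hp_sum t (by omega) (by omega)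
      have e1 : (∑ i ∈ Finset.Icc 1 t, p t i * errE i t) - α
          = ∑ i ∈ Finset.Icc 1 t, p t i * (errE i t - α) := by
        have : ∑ i ∈ Finset.Icc 1 t, p t i * (errE i t - α)
            = (∑ i ∈ Finset.Icc 1 t, p t i * errE i t)
              - (∑ i ∈ Finset.Icc 1 t, p t i) * α := by
          rw [Finset.sum_mul, ← Finset.sum_sub_distrib]
          exact Finset.sum_congr rfl (fun i _ => by ring)
        rw [this, hsum, one_mul]
      have e2 : ∑ i ∈ Finset.Icc 1 t₀, p t₀ i * G i t₀ / G i t * (errE i t - α)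
          = ∑ i ∈ Finset.Icc 1 t, p t₀ i * G i t₀ / G i t * (errE i t - α) := by
        apply Finset.sum_subset
        · exact Finset.Icc_subset_Icc_right (by omega)
        · intro i hi hni
          rw [Finset.mem_Icc] at hi hni
          have hlt : t₀ < i := by omega
          rw [hp_zero t₀ i hlt]
          ring
      rw [e1, e2, ← Finset.sum_add_distrib]
      exact Finset.sum_congr rfl (fun i _ => by ring)
    rw [Finset.sum_congr rfl step1, Finset.sum_add_distrib]
    congr 1
    rw [Finset.sum_comm]
    apply Finset.sum_congr rfl
    intro i hi
    rw [Finset.mem_Icc] at hi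
    rw [← htel i hi.1 hi.2, Finset.mul_sum]
    exact Finset.sum_congr rfl (fun t _ => by ring)
  -- bound the first piece
  have hb1 : |∑ i ∈ Finset.Icc 1 t₀, p t₀ i * G i t₀ * ((s' i (t₁ + 1) - s' i (t₀ + 1)) / η)|
      ≤ (2 + Real.sqrt 3) * Real.sqrt T := by
    calc |∑ i ∈ Finset.Icc 1 t₀, p t₀ i * G i t₀ * ((s' i (t₁ + 1) - s' i (t₀ + 1)) / η)|
        ≤ ∑ i ∈ Finset.Icc 1 t₀,
            |p t₀ i * G i t₀ * ((s' i (t₁ + 1) - s' i (t₀ + 1)) / η)| :=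
          Finset.abs_sum_le_sum_abs _ _
      _ ≤ ∑ i ∈ Finset.Icc 1 t₀, p t₀ i * ((2 + Real.sqrt 3) * Real.sqrt T) := by
          apply Finset.sum_le_sum
          intro i hi
          rw [Finset.mem_Icc] at hi
          have hg := hGpos i t₀ hi.1 hi.2 (by omega)
          have e : |p t₀ i * G i t₀ * ((s' i (t₁ + 1) - s' i (t₀ + 1)) / η)|
              = p t₀ i * (G i t₀ * (|s' i (t₁ + 1) - s' i (t₀ + 1)| / η)) := by
            rw [abs_mul, abs_mul, abs_div, abs_of_nonneg (hp_nonneg _ _),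
              abs_of_pos hg, abs_of_pos hη]
            ring
          rw [e]
          apply mul_le_mul_of_nonneg_left _ (hp_nonneg _ _)
          have h1 := hGle i hi.1 hi.2
          have h2 : |s' i (t₁ + 1) - s' i (t₀ + 1)| / η ≤ 2 + Real.sqrt 3 := by
            rw [div_le_iff₀ hη]
            have := hdiffb i hi.1 hi.2
            linarith [hD2η]
          calc G i t₀ * (|s' i (t₁ + 1) - s' i (t₀ + 1)| / η)
              ≤ Real.sqrt T * (2 + Real.sqrt 3) := by
                apply mul_le_mul h1 h2 (by positivity) (Real.sqrt_nonneg T)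
            _ = (2 + Real.sqrt 3) * Real.sqrt T := by ring
      _ = (2 + Real.sqrt 3) * Real.sqrt T := by
          rw [← Finset.sum_mul, hp_sum t₀ ht₀ (by omega), one_mul]
  -- bound the second piece
  have hb2 : |∑ t ∈ Finset.Icc (t₀ + 1) t₁, ∑ i ∈ Finset.Icc 1 t,
        (p t i - p t₀ i * G i t₀ / G i t) * (errE i t - α)|
      ≤ ((t₁ : ℝ) - (t₀ : ℝ)) *
          (Finset.Icc (t₀ + 1) t₁).sup' (Finset.nonempty_Icc.mpr (by omega))
            (fun t => ∑ i ∈ Finset.Icc 1 t, |p t i - p t₀ i * G i t₀ / G i t|) := by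
    calc |∑ t ∈ Finset.Icc (t₀ + 1) t₁, ∑ i ∈ Finset.Icc 1 t,
          (p t i - p t₀ i * G i t₀ / G i t) * (errE i t - α)|
        ≤ ∑ t ∈ Finset.Icc (t₀ + 1) t₁, |∑ i ∈ Finset.Icc 1 t,
            (p t i - p t₀ i * G i t₀ / G i t) * (errE i t - α)| :=
          Finset.abs_sum_le_sum_abs _ _
      _ ≤ ∑ t ∈ Finset.Icc (t₀ + 1) t₁,
            (Finset.Icc (t₀ + 1) t₁).sup' (Finset.nonempty_Icc.mpr (by omega))
              (fun t => ∑ i ∈ Finset.Icc 1 t, |p t i - p t₀ i * G i t₀ / G i t|) := by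
          apply Finset.sum_le_sum
          intro t ht
          have htm := Finset.mem_Icc.mp ht
          calc |∑ i ∈ Finset.Icc 1 t,
                (p t i - p t₀ i * G i t₀ / G i t) * (errE i t - α)|
              ≤ ∑ i ∈ Finset.Icc 1 t,
                  |(p t i - p t₀ i * G i t₀ / G i t) * (errE i t - α)| :=
                Finset.abs_sum_le_sum_abs _ _
            _ ≤ ∑ i ∈ Finset.Icc 1 t, |p t i - p t₀ i * G i t₀ / G i t| := by
                apply Finset.sum_le_sum
                intro i hi
                rw [Finset.mem_Icc] at hi
                rw [abs_mul]
                exact mul_le_of_le_one_right (abs_nonneg _)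
                  (herrabs i t hi.1 hi.2 (by omega))
            _ ≤ _ := Finset.le_sup'
                (fun t => ∑ i ∈ Finset.Icc 1 t, |p t i - p t₀ i * G i t₀ / G i t|) ht
      _ = ((t₁ : ℝ) - (t₀ : ℝ)) *
            (Finset.Icc (t₀ + 1) t₁).sup' (Finset.nonempty_Icc.mpr (by omega))
              (fun t => ∑ i ∈ Finset.Icc 1 t, |p t i - p t₀ i * G i t₀ / G i t|) := by
          rw [Finset.sum_const, nsmul_eq_mul, Nat.card_Icc]
          congr 1
          have hc : t₁ + 1 - (t₀ + 1) = t₁ - t₀ := by omega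
          rw [hc, Nat.cast_sub (le_of_lt h01)]
  simp only [hGeq]
  rw [key]
  exact le_trans (abs_add_le _ _) (add_le_add hb1 hb2)
end

section
/- (Coverage bound for randomized SAOCP with arbitrary aggregation weights.) Let α ∈ (0,1), D > 0, η = D/√3, T ≥ 1, and S_1, …, S_T ∈ [0, D]. For each i ∈ {1, …, T}, let expert i run SF-OGD from time i through time T with any initialization ŝ_{i,i} ∈ [−η, D+η], iterates ŝ_{i,t}, miscoverage indicators err_{t,i} := 1{ŝ_{i,t} < S_t}, and cumulative gradient norms G^i_{i:t} := sqrt(Σ_{τ=i}^{t} (err_{τ,i} − α)²). For each t let p_{t,·} be an arbitrary probability vector over {1, …, t}, and set ẽrr_t := Σ_{i=1}^{t} p_{t,i} err_{t,i}. Then there exists an absolute constant C > 0 such that for every β ∈ (1/2, 1): |(1/T) Σ_{t=1}^{T} ẽrr_t − α| ≤ C ( T^{1/2−β} + T^{β−1} · S_β(T) ), where, with t_j := min{ j⌈T^β⌉, T } for j ≥ 0 and groups G_j := {t_{j−1}+1, …, t_j} for j = 1, …, K := ⌈T^{1−β}⌉, S_β(T) := 1 + Σ_{j=2}^{K} max_{t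 ∈ G_j} Σ_{i=1}^{t} | p_{t,i} − p_{t_{j−1},i} · G^i_{i:t_{j−1}} / G^i_{i:t} | (setting p_{t_{j−1},i} := 0 for i > t_{j−1}). -/
set_option maxHeartbeats 1000000

open Finset

lemma le_finset_biSup (s : Finset ℕ) (f : ℕ → ℝ) {t₀ : ℕ}
    (ht₀ : t₀ ∈ s) : f t₀ ≤ ⨆ t ∈ s, f t := by
  have hb : BddAbove (Set.range fun t => ⨆ _ : t ∈ s, f t) := by
    refine ⟨(insert (0:ℝ) (s.image f)).max' (insert_nonempty _ _), ?_⟩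
    rintro x ⟨t, rfl⟩
    by_cases ht : t ∈ s
    · show (⨆ _ : t ∈ s, f t) ≤ _
      rw [ciSup_pos (f := fun _ => f t) ht]
      exact Finset.le_max' _ _ (mem_insert_of_mem (mem_image_of_mem f ht))
    · show (⨆ _ : t ∈ s, f t) ≤ _
      haveI : IsEmpty (t ∈ s) := ⟨ht⟩
      rw [Real.iSup_of_isEmpty]
      exact Finset.le_max' _ _ (mem_insert_self _ _)
  calc f t₀ = ⨆ _ : t₀ ∈ s, f t₀ := (ciSup_pos (f := fun _ => f t₀) ht₀).symm
    _ ≤ ⨆ t ∈ s, f t := le_ciSup hb t₀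

lemma finset_biSup_nonneg (s : Finset ℕ) (f : ℕ → ℝ) (hf : ∀ t ∈ s, 0 ≤ f t) :
    0 ≤ ⨆ t ∈ s, f t := by
  rcases s.eq_empty_or_nonempty with rfl | ⟨t₀, ht₀⟩
  · simp
  · exact le_trans (hf t₀ ht₀) (le_finset_biSup s f ht₀)

lemma sum_groups {M : Type*} [AddCommMonoid M] (f : ℕ → M) (e : ℕ → ℕ) (he0 : e 0 = 0)
    (hmono : Monotone e) (K : ℕ) :
    ∑ j ∈ Finset.Icc 1 K, ∑ t ∈ Finset.Icc (e (j-1) + 1) (e j), f t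
      = ∑ t ∈ Finset.Icc 1 (e K), f t := by
  induction K with
  | zero => simp [he0]
  | succ K ih =>
    rw [Finset.sum_Icc_succ_top (Nat.le_add_left 1 K), ih]
    simp only [Nat.add_sub_cancel]
    rw [show Finset.Icc 1 (e K) = Finset.Ioc 0 (e K) by rfl,
      show Finset.Icc (e K + 1) (e (K+1)) = Finset.Ioc (e K) (e (K+1)) by
        rw [← Finset.Icc_add_one_left_eq_Ioc],
      show Finset.Icc 1 (e (K+1)) = Finset.Ioc 0 (e (K+1)) by rfl]
    exact Finset.sum_Ioc_consecutive f (Nat.zero_le _) (hmono (Nat.le_succ K))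



/-- The group endpoint `t_j = min(j ⌈T^β⌉, T)` used for grouping time steps. -/
noncomputable def groupEnd (T : ℕ) (β : ℝ) (j : ℕ) : ℕ := min (j * ⌈(T:ℝ) ^ β⌉₊) T

/-- Coverage bound for randomized SAOCP with arbitrary aggregation weights: there is an
absolute constant `C > 0` such that, for SF-OGD experts (learning rate `η = D/√3`,
expert `i` started at time `i` in `[-η, D+η]`) aggregated with arbitrary probability
vectors `p t` over `{1, …, t}`, the expected miscoverage `ẽrr_t = Σ_i p_{t,i} err_{t,i}`
satisfies, for every `β ∈ (1/2, 1)`,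
`|(1/T) Σ_t ẽrr_t - α| ≤ C (T^{1/2-β} + T^{β-1} S_β(T))`, where `S_β(T)` is defined via
groups `G_j = {t_{j-1}+1, …, t_j}`, `t_j = min(j⌈T^β⌉, T)`, `K = ⌈T^{1-β}⌉`. -/
theorem saocp_randomized_coverage :
    ∃ C : ℝ, 0 < C ∧
      ∀ (α D : ℝ), α ∈ Set.Ioo (0:ℝ) 1 → 0 < D →
      ∀ (T : ℕ), 1 ≤ T →
      ∀ (S : ℕ → ℝ), (∀ t ∈ Finset.Icc 1 T, S t ∈ Set.Icc 0 D) →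
      ∀ (sexp errE : ℕ → ℕ → ℝ),
        (∀ i, 1 ≤ i → i ≤ T →
          sexp i i ∈ Set.Icc (-(D / Real.sqrt 3)) (D + D / Real.sqrt 3)) →
        (∀ i t, 1 ≤ i → i ≤ t → t ≤ T →
          errE i t = if sexp i t < S t then (1:ℝ) else 0) →
        (∀ i t, 1 ≤ i → i ≤ t → t < T →
          sexp i (t + 1) = sexp i t + (D / Real.sqrt 3) * (errE i t - α) /
            Real.sqrt (∑ τ ∈ Finset.Icc i t, (errE i τ - α) ^ 2)) →
      ∀ (p : ℕ → ℕ → ℝ),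
        (∀ t i, t < i → p t i = 0) →
        (∀ t i, 0 ≤ p t i) →
        (∀ t, 1 ≤ t → t ≤ T → ∑ i ∈ Finset.Icc 1 t, p t i = 1) →
      ∀ β : ℝ, 1/2 < β → β < 1 →
        |(1 / (T:ℝ)) * (∑ t ∈ Finset.Icc 1 T, ∑ i ∈ Finset.Icc 1 t, p t i * errE i t) - α|
          ≤ C * ((T:ℝ) ^ (1/2 - β) + (T:ℝ) ^ (β - 1) *
              (1 + ∑ j ∈ Finset.Icc 2 ⌈(T:ℝ) ^ (1 - β)⌉₊,
                ⨆ t ∈ Finset.Icc (groupEnd T β (j - 1) + 1) (groupEnd T β j),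
                  ∑ i ∈ Finset.Icc 1 t,
                    |p t i - p (groupEnd T β (j - 1)) i *
                      Real.sqrt (∑ τ ∈ Finset.Icc i (groupEnd T β (j - 1)),
                        (errE i τ - α) ^ 2) /
                      Real.sqrt (∑ τ ∈ Finset.Icc i t, (errE i τ - α) ^ 2)|)) := by
  refine ⟨12, by norm_num, ?_⟩
  intro α D hα hD T hT S hS sexp errE hinit herr hrec p hp0 hpnn hpsum β hβ1 hβ2
  set η := D / Real.sqrt 3 with hη
  have hs3 : (0:ℝ) < Real.sqrt 3 := by positivity
  have hηpos : 0 < η := div_pos hD hs3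
  set Gs : ℕ → ℕ → ℝ := fun i t => Real.sqrt (∑ τ ∈ Finset.Icc i t, (errE i τ - α) ^ 2)
    with hGs
  have hGseq : ∀ i t, Real.sqrt (∑ τ ∈ Finset.Icc i t, (errE i τ - α) ^ 2) = Gs i t :=
    fun i t => rfl
  simp only [hGseq]
  -- basic facts
  have h01 : ∀ i t, 1 ≤ i → i ≤ t → t ≤ T → errE i t = 0 ∨ errE i t = 1 := by
    intro i t h1 h2 h3
    rw [herr i t h1 h2 h3]
    split <;> simp
  have habs1 : ∀ i t, 1 ≤ i → i ≤ t → t ≤ T → |errE i t - α| ≤ 1 := by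
    intro i t h1 h2 h3
    rcases h01 i t h1 h2 h3 with h | h <;> rw [h] <;> rw [abs_le] <;>
      constructor <;> nlinarith [hα.1, hα.2]
  have hsqpos : ∀ i t, 1 ≤ i → i ≤ t → t ≤ T → 0 < (errE i t - α) ^ 2 := by
    intro i t h1 h2 h3
    rcases h01 i t h1 h2 h3 with h | h <;> rw [h] <;> nlinarith [hα.1, hα.2]
  have hGpos : ∀ i t, 1 ≤ i → i ≤ t → t ≤ T → 0 < Gs i t := by
    intro i t h1 h2 h3
    apply Real.sqrt_pos.2
    apply Finset.sum_pos
    · intro τ hτ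
      rw [Finset.mem_Icc] at hτ
      exact hsqpos i τ h1 hτ.1 (le_trans hτ.2 h3)
    · exact ⟨i, Finset.mem_Icc.2 ⟨le_refl i, h2⟩⟩
  have hGnn : ∀ i t, 0 ≤ Gs i t := fun i t => Real.sqrt_nonneg _
  have hGleT : ∀ i t, 1 ≤ i → i ≤ t → t ≤ T → Gs i t ≤ Real.sqrt T := by
    intro i t h1 h2 h3
    apply Real.sqrt_le_sqrt
    calc ∑ τ ∈ Finset.Icc i t, (errE i τ - α) ^ 2
        ≤ ∑ τ ∈ Finset.Icc i t, 1 := by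
          apply Finset.sum_le_sum
          intro τ hτ
          rw [Finset.mem_Icc] at hτ
          have := habs1 i τ h1 hτ.1 (le_trans hτ.2 h3)
          nlinarith [abs_nonneg (errE i τ - α), sq_abs (errE i τ - α)]
      _ = ((Finset.Icc i t).card : ℝ) := by simp
      _ ≤ (T : ℝ) := by
          rw [Nat.card_Icc]
          exact_mod_cast Nat.le_of_lt_succ (by omega : t + 1 - i < T + 1)
  have hgleG : ∀ i t, 1 ≤ i → i ≤ t → t ≤ T → |errE i t - α| ≤ Gs i t := by
    intro i t h1 h2 h3
    rw [← Real.sqrt_sq_eq_abs]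
    apply Real.sqrt_le_sqrt
    apply Finset.single_le_sum (f := fun τ => (errE i τ - α)^2)
      (fun τ _ => sq_nonneg _) (Finset.mem_Icc.2 ⟨h2, le_refl t⟩)
  -- iterate bounds
  have hbound : ∀ i t, 1 ≤ i → i ≤ t → t ≤ T → sexp i t ∈ Set.Icc (-η) (D + η) := by
    intro i t h1 h2
    induction t, h2 using Nat.le_induction with
    | base => intro _; exact hinit i h1 (by omega)
    | succ t ht ih =>
      intro hsT
      have htT : t ≤ T := by omega
      have ihh := ih htT
      have hGp := hGpos i t h1 ht htT
      have hstep : |η * (errE i t - α) / Gs i t| ≤ η := by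
        rw [abs_div, abs_mul, abs_of_pos hηpos, abs_of_pos hGp, div_le_iff₀ hGp]
        exact mul_le_mul_of_nonneg_left (hgleG i t h1 ht htT) hηpos.le
      rw [hrec i t h1 ht (by omega)]
      have hSt := hS t (Finset.mem_Icc.2 ⟨by omega, htT⟩)
      rw [hGseq]
      rcases lt_or_ge (sexp i t) (S t) with hc | hc
      · have he1 : errE i t = 1 := by rw [herr i t h1 ht htT, if_pos hc]
        constructor
        · have : 0 ≤ η * (errE i t - α) / Gs i t := by
            apply div_nonneg _ hGp.le
            apply mul_nonneg hηpos.le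
            rw [he1]; linarith [hα.2]
          linarith [ihh.1]
        · have : sexp i t < D := lt_of_lt_of_le hc hSt.2
          linarith [le_trans (le_abs_self _) hstep]
      · have he0 : errE i t = 0 := by rw [herr i t h1 ht htT, if_neg (not_lt.2 hc)]
        constructor
        · have hge : -η ≤ η * (errE i t - α) / Gs i t :=
            le_trans (neg_le_neg hstep) (neg_abs_le _)
          have : 0 ≤ sexp i t := le_trans hSt.1 hc
          linarith
        · have : η * (errE i t - α) / Gs i t ≤ 0 := by
            apply div_nonpos_of_nonpos_of_nonneg _ hGp.le
            apply mul_nonpos_of_nonneg_of_nonpos hηpos.le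
            rw [he0]; linarith [hα.1]
          linarith [ihh.2]
  -- telescoping
  have htel : ∀ i t, 1 ≤ i → i ≤ t → t ≤ T →
      sexp i t = sexp i i + η * ∑ τ ∈ Finset.Ico i t, (errE i τ - α) / Gs i τ := by
    intro i t h1 h2
    induction t, h2 using Nat.le_induction with
    | base => intro _; simp
    | succ t ht ih =>
      intro hsT
      have htT : t ≤ T := by omega
      rw [Finset.sum_Ico_succ_top ht, hrec i t h1 ht (by omega), ih htT, hGseq]
      ring
  -- window bound
  have hwin : ∀ i a b, 1 ≤ i → i ≤ a → a ≤ b → b ≤ T →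
      |∑ τ ∈ Finset.Icc (a+1) b, (errE i τ - α) / Gs i τ| ≤ Real.sqrt 3 + 3 := by
    intro i a b h1 hia hab hbT
    rcases le_or_gt b a with hba | hba
    · rw [Finset.Icc_eq_empty (by omega)]
      simp
      positivity
    · have hab1 : a + 1 ≤ b := hba
      rw [show Finset.Icc (a+1) b = Finset.Ico (a+1) (b+1) by rw [Finset.Ico_add_one_right_eq_Icc],
        Finset.sum_Ico_succ_top (by omega)]
      have hsplit : ∑ τ ∈ Finset.Ico (a+1) b, (errE i τ - α) / Gs i τ
          = (∑ τ ∈ Finset.Ico i b, (errE i τ - α) / Gs i τ)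
            - ∑ τ ∈ Finset.Ico i (a+1), (errE i τ - α) / Gs i τ := by
        rw [← Finset.sum_Ico_consecutive _ (by omega : i ≤ a + 1) (by omega : a + 1 ≤ b)]
        ring
      have e1 := htel i b h1 (by omega) hbT
      have e2 := htel i (a+1) h1 (by omega) (by omega)
      have hb1 := hbound i b h1 (by omega) hbT
      have hb2 := hbound i (a+1) h1 (by omega) (by omega)
      have hdiff : |∑ τ ∈ Finset.Ico (a+1) b, (errE i τ - α) / Gs i τ| ≤ (D + 2*η)/η := by
        rw [hsplit]
        have : (∑ τ ∈ Finset.Ico i b, (errE i τ - α) / Gs i τ)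
            - ∑ τ ∈ Finset.Ico i (a+1), (errE i τ - α) / Gs i τ
            = (sexp i b - sexp i (a+1)) / η := by
          rw [e1, e2]; field_simp; ring
        rw [this, abs_div, abs_of_pos hηpos, div_le_div_iff_of_pos_right hηpos]
        rw [abs_sub_le_iff]
        constructor <;>
          · simp only [Set.mem_Icc] at hb1 hb2; linarith [hb1.1, hb1.2, hb2.1, hb2.2]
      have hlast : |(errE i b - α) / Gs i b| ≤ 1 := by
        rw [abs_div, abs_of_pos (hGpos i b h1 (by omega) hbT),
          div_le_one (hGpos i b h1 (by omega) hbT)]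
        exact hgleG i b h1 (by omega) hbT
      have hDη : (D + 2*η)/η = Real.sqrt 3 + 2 := by
        have hDdη : D / η = Real.sqrt 3 := by
          rw [hη, div_div_eq_mul_div, mul_comm, mul_div_assoc, div_self (ne_of_gt hD), mul_one]
        have h2 : 2*η/η = 2 := by field_simp
        rw [add_div, hDdη, h2]
      calc |_ + (errE i b - α) / Gs i b| ≤ _ + _ := abs_add_le _ _
        _ ≤ (D + 2*η)/η + 1 := add_le_add hdiff hlast
        _ = Real.sqrt 3 + 3 := by rw [hDη]; ring
  -- grouping setup
  set K := ⌈(T:ℝ) ^ (1 - β)⌉₊ with hKdef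
  set e := groupEnd T β with hedef
  set TB := ⌈(T:ℝ) ^ β⌉₊ with hTBdef
  have hT0 : (0:ℝ) < T := by exact_mod_cast hT
  have hT1 : (1:ℝ) ≤ T := by exact_mod_cast hT
  have hTb1 : (1:ℝ) ≤ (T:ℝ) ^ β := Real.one_le_rpow hT1 (by linarith)
  have hT1b1 : (1:ℝ) ≤ (T:ℝ) ^ (1 - β) := Real.one_le_rpow hT1 (by linarith)
  have hTB1 : 1 ≤ TB := by
    rw [hTBdef]
    exact Nat.one_le_iff_ne_zero.2 (by positivity)
  have hK1 : 1 ≤ K := by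
    rw [hKdef]
    exact Nat.one_le_iff_ne_zero.2 (by positivity)
  have heval : ∀ j, e j = min (j * TB) T := fun j => rfl
  have he0 : e 0 = 0 := by rw [heval]; simp
  have hemono : Monotone e := by
    intro x y hxy
    rw [heval, heval]
    exact min_le_min (Nat.mul_le_mul_right _ hxy) le_rfl
  have heT : ∀ j, e j ≤ T := by intro j; rw [heval]; exact min_le_right _ _
  have heK : e K = T := by
    rw [heval]
    apply min_eq_right
    have hcast : (T:ℝ) ≤ (K:ℝ) * (TB:ℝ) := by
      calc (T:ℝ) = (T:ℝ) ^ (1-β) * (T:ℝ) ^ β := by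
            rw [← Real.rpow_add hT0]; norm_num
        _ ≤ (K:ℝ) * (TB:ℝ) := by
            apply mul_le_mul (Nat.le_ceil _) (Nat.le_ceil _) (by positivity)
              (Nat.cast_nonneg _)
    exact_mod_cast hcast
  have hestep : ∀ j, 1 ≤ j → e j ≤ e (j-1) + TB := by
    intro j hj
    obtain ⟨j', rfl⟩ : ∃ j', j = j' + 1 := ⟨j - 1, by omega⟩
    rw [heval, heval]
    simp only [Nat.add_sub_cancel]
    rw [add_mul, one_mul]
    omega
  have hcard : ∀ j, 1 ≤ j → ((Finset.Icc (e (j-1) + 1) (e j)).card : ℝ) ≤ (TB:ℝ) := by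
    intro j hj
    have := hestep j hj
    have := hemono (by omega : j - 1 ≤ j)
    rw [Nat.card_Icc]
    exact_mod_cast (by omega : e j + 1 - (e (j-1) + 1) ≤ TB)
  -- rewrite the LHS
  have hFdef : ∀ t, 1 ≤ t → t ≤ T →
      (∑ i ∈ Finset.Icc 1 t, p t i * errE i t) - α
        = ∑ i ∈ Finset.Icc 1 t, p t i * (errE i t - α) := by
    intro t h1 h2
    simp only [mul_sub]
    rw [Finset.sum_sub_distrib, ← Finset.sum_mul, hpsum t h1 h2, one_mul]
  have hLHS : (1 / (T:ℝ)) * (∑ t ∈ Finset.Icc 1 T, ∑ i ∈ Finset.Icc 1 t, p t i * errE i t)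
      - α = (1 / (T:ℝ)) * ∑ t ∈ Finset.Icc 1 T,
        ∑ i ∈ Finset.Icc 1 t, p t i * (errE i t - α) := by
    have h2 : ∑ t ∈ Finset.Icc 1 T, ∑ i ∈ Finset.Icc 1 t, p t i * (errE i t - α)
        = (∑ t ∈ Finset.Icc 1 T, ∑ i ∈ Finset.Icc 1 t, p t i * errE i t) - T * α := by
      have : ∀ t ∈ Finset.Icc 1 T, ∑ i ∈ Finset.Icc 1 t, p t i * (errE i t - α)
          = (∑ i ∈ Finset.Icc 1 t, p t i * errE i t) - α := by
        intro t ht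
        rw [Finset.mem_Icc] at ht
        exact (hFdef t ht.1 ht.2).symm
      rw [Finset.sum_congr rfl this, Finset.sum_sub_distrib, Finset.sum_const,
        Nat.card_Icc]
      simp [nsmul_eq_mul]
    rw [h2]
    field_simp
  -- the big bound
  set F : ℕ → ℝ := fun t => ∑ i ∈ Finset.Icc 1 t, p t i * (errE i t - α) with hF
  have habsF : ∀ t, 1 ≤ t → t ≤ T → |F t| ≤ 1 := by
    intro t h1 h2
    calc |F t| ≤ ∑ i ∈ Finset.Icc 1 t, |p t i * (errE i t - α)| :=
          Finset.abs_sum_le_sum_abs _ _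
      _ ≤ ∑ i ∈ Finset.Icc 1 t, p t i := by
          apply Finset.sum_le_sum
          intro i hi
          rw [Finset.mem_Icc] at hi
          rw [abs_mul, abs_of_nonneg (hpnn t i)]
          calc p t i * |errE i t - α| ≤ p t i * 1 :=
                mul_le_mul_of_nonneg_left (habs1 i t hi.1 hi.2 h2) (hpnn t i)
            _ = p t i := mul_one _
      _ = 1 := hpsum t h1 h2
  have hgroup1 : |∑ t ∈ Finset.Icc (e 0 + 1) (e 1), F t| ≤ (TB:ℝ) := by
    calc |∑ t ∈ Finset.Icc (e 0 + 1) (e 1), F t|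
        ≤ ∑ t ∈ Finset.Icc (e 0 + 1) (e 1), |F t| := Finset.abs_sum_le_sum_abs _ _
      _ ≤ ∑ t ∈ Finset.Icc (e 0 + 1) (e 1), 1 := by
          apply Finset.sum_le_sum
          intro t ht
          rw [Finset.mem_Icc] at ht
          exact habsF t (by omega) (le_trans ht.2 (heT 1))
      _ = ((Finset.Icc (e 0 + 1) (e 1)).card : ℝ) := by simp
      _ ≤ (TB:ℝ) := hcard 1 le_rfl
  have hSupnn : ∀ j : ℕ, 0 ≤ ⨆ t ∈ Finset.Icc (e (j-1) + 1) (e j),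
      ∑ i ∈ Finset.Icc 1 t, |p t i - p (e (j-1)) i * Gs i (e (j-1)) / Gs i t| := by
    intro j
    apply finset_biSup_nonneg
    intro t _
    exact Finset.sum_nonneg fun i _ => abs_nonneg _
  have hgroupj : ∀ j, 2 ≤ j → j ≤ K →
      |∑ t ∈ Finset.Icc (e (j-1) + 1) (e j), F t|
        ≤ (Real.sqrt 3 + 3) * Real.sqrt T + (TB:ℝ) *
          ⨆ t ∈ Finset.Icc (e (j-1) + 1) (e j),
            ∑ i ∈ Finset.Icc 1 t, |p t i - p (e (j-1)) i * Gs i (e (j-1)) / Gs i t| := by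
    intro j hj2 hjK
    have ha1 : 1 ≤ e (j-1) := by
      rw [heval]
      have h1 : TB ≤ (j-1) * TB := Nat.le_mul_of_pos_left TB (by omega)
      have := hTB1; have := hT
      omega
    set a := e (j-1) with hadef
    set b := e j with hbdef
    have hab : a ≤ b := hemono (by omega)
    have hbT : b ≤ T := heT j
    have haT : a ≤ T := heT (j-1)
    have key : ∀ t ∈ Finset.Icc (a+1) b, F t
        = (∑ i ∈ Finset.Icc 1 a, p a i * Gs i a * ((errE i t - α) / Gs i t))
          + ∑ i ∈ Finset.Icc 1 t, (p t i - p a i * Gs i a / Gs i t) * (errE i t - α) := by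
      intro t ht
      rw [Finset.mem_Icc] at ht
      have hsub : ∑ i ∈ Finset.Icc 1 a, p a i * Gs i a * ((errE i t - α) / Gs i t)
          = ∑ i ∈ Finset.Icc 1 t, p a i * Gs i a * ((errE i t - α) / Gs i t) := by
        apply Finset.sum_subset (Finset.Icc_subset_Icc_right (by omega))
        intro i hi hni
        rw [Finset.mem_Icc] at hi
        rw [Finset.mem_Icc] at hni
        rw [hp0 a i (by omega)]
        ring
      rw [hF, hsub, ← Finset.sum_add_distrib]
      apply Finset.sum_congr rfl
      intro i hi
      rw [Finset.mem_Icc] at hi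
      have hGp : 0 < Gs i t := hGpos i t hi.1 hi.2 (le_trans ht.2 hbT)
      field_simp
      ring
    rw [Finset.sum_congr rfl key, Finset.sum_add_distrib]
    have hmainb : |∑ t ∈ Finset.Icc (a+1) b,
        ∑ i ∈ Finset.Icc 1 a, p a i * Gs i a * ((errE i t - α) / Gs i t)|
        ≤ (Real.sqrt 3 + 3) * Real.sqrt T := by
      rw [Finset.sum_comm]
      calc |∑ i ∈ Finset.Icc 1 a, ∑ t ∈ Finset.Icc (a+1) b,
            p a i * Gs i a * ((errE i t - α) / Gs i t)|
          ≤ ∑ i ∈ Finset.Icc 1 a, |∑ t ∈ Finset.Icc (a+1) b,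
            p a i * Gs i a * ((errE i t - α) / Gs i t)| := Finset.abs_sum_le_sum_abs _ _
        _ ≤ ∑ i ∈ Finset.Icc 1 a, p a i * ((Real.sqrt 3 + 3) * Real.sqrt T) := by
            apply Finset.sum_le_sum
            intro i hi
            rw [Finset.mem_Icc] at hi
            rw [← Finset.mul_sum, abs_mul,
              abs_of_nonneg (mul_nonneg (hpnn a i) (hGnn i a))]
            calc p a i * Gs i a * |∑ t ∈ Finset.Icc (a+1) b, (errE i t - α) / Gs i t|
                ≤ p a i * Gs i a * (Real.sqrt 3 + 3) :=
                  mul_le_mul_of_nonneg_left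
                    (hwin i a b hi.1 hi.2 hab hbT)
                    (mul_nonneg (hpnn a i) (hGnn i a))
              _ ≤ p a i * Real.sqrt T * (Real.sqrt 3 + 3) := by
                  have h1 := hGleT i a hi.1 hi.2 haT
                  have h2 := hpnn a i
                  have h3 := hGnn i a
                  nlinarith [mul_nonneg (mul_nonneg h2 (sub_nonneg.2 h1))
                    (by positivity : (0:ℝ) ≤ Real.sqrt 3 + 3)]
              _ = p a i * ((Real.sqrt 3 + 3) * Real.sqrt T) := by ring
        _ = (∑ i ∈ Finset.Icc 1 a, p a i) * ((Real.sqrt 3 + 3) * Real.sqrt T) :=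
            (Finset.sum_mul _ _ _).symm
        _ = (Real.sqrt 3 + 3) * Real.sqrt T := by rw [hpsum a ha1 haT, one_mul]
    have herrb : |∑ t ∈ Finset.Icc (a+1) b,
        ∑ i ∈ Finset.Icc 1 t, (p t i - p a i * Gs i a / Gs i t) * (errE i t - α)|
        ≤ (TB:ℝ) * ⨆ t ∈ Finset.Icc (a + 1) b,
          ∑ i ∈ Finset.Icc 1 t, |p t i - p a i * Gs i a / Gs i t| := by
      calc |∑ t ∈ Finset.Icc (a+1) b, ∑ i ∈ Finset.Icc 1 t,
            (p t i - p a i * Gs i a / Gs i t) * (errE i t - α)|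
          ≤ ∑ t ∈ Finset.Icc (a+1) b, |∑ i ∈ Finset.Icc 1 t,
            (p t i - p a i * Gs i a / Gs i t) * (errE i t - α)| :=
            Finset.abs_sum_le_sum_abs _ _
        _ ≤ ∑ _t ∈ Finset.Icc (a+1) b, ⨆ t ∈ Finset.Icc (a + 1) b,
            ∑ i ∈ Finset.Icc 1 t, |p t i - p a i * Gs i a / Gs i t| := by
            apply Finset.sum_le_sum
            intro t ht
            have htm := Finset.mem_Icc.1 ht
            calc |∑ i ∈ Finset.Icc 1 t, (p t i - p a i * Gs i a / Gs i t) * (errE i t - α)|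
                ≤ ∑ i ∈ Finset.Icc 1 t,
                  |(p t i - p a i * Gs i a / Gs i t) * (errE i t - α)| :=
                  Finset.abs_sum_le_sum_abs _ _
              _ ≤ ∑ i ∈ Finset.Icc 1 t, |p t i - p a i * Gs i a / Gs i t| := by
                  apply Finset.sum_le_sum
                  intro i hi
                  rw [Finset.mem_Icc] at hi
                  rw [abs_mul]
                  calc |p t i - p a i * Gs i a / Gs i t| * |errE i t - α|
                      ≤ |p t i - p a i * Gs i a / Gs i t| * 1 :=
                        mul_le_mul_of_nonneg_left
                          (habs1 i t hi.1 hi.2 (le_trans htm.2 hbT)) (abs_nonneg _)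
                    _ = _ := mul_one _
              _ ≤ ⨆ t ∈ Finset.Icc (a + 1) b,
                  ∑ i ∈ Finset.Icc 1 t, |p t i - p a i * Gs i a / Gs i t| :=
                  le_finset_biSup _ (fun t => ∑ i ∈ Finset.Icc 1 t,
                    |p t i - p a i * Gs i a / Gs i t|) ht
        _ = ((Finset.Icc (a+1) b).card : ℝ) * ⨆ t ∈ Finset.Icc (a + 1) b,
            ∑ i ∈ Finset.Icc 1 t, |p t i - p a i * Gs i a / Gs i t| := by
            rw [Finset.sum_const, nsmul_eq_mul]
        _ ≤ (TB:ℝ) * ⨆ t ∈ Finset.Icc (a + 1) b,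
            ∑ i ∈ Finset.Icc 1 t, |p t i - p a i * Gs i a / Gs i t| :=
            mul_le_mul_of_nonneg_right (hcard j (by omega)) (hSupnn j)
    exact le_trans (abs_add_le _ _) (add_le_add hmainb herrb)
  -- assemble
  have hsplitK : ∑ t ∈ Finset.Icc 1 T, F t = (∑ t ∈ Finset.Icc (e 0 + 1) (e 1), F t)
      + ∑ j ∈ Finset.Icc 2 K, ∑ t ∈ Finset.Icc (e (j-1) + 1) (e j), F t := by
    rw [← heK, ← sum_groups F e he0 hemono K]
    rw [show Finset.Icc 1 K = insert 1 (Finset.Icc 2 K) by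
      ext x
      simp only [Finset.mem_Icc, Finset.mem_insert]
      omega]
    rw [Finset.sum_insert (by simp)]
  have hcard2K : ((Finset.Icc 2 K).card : ℝ) = (K:ℝ) - 1 := by
    rw [Nat.card_Icc]
    have : K + 1 - 2 = K - 1 := by omega
    rw [this]
    push_cast [hK1]
    ring
  have hbig : |∑ t ∈ Finset.Icc 1 T, F t|
      ≤ (TB:ℝ) * (1 + ∑ j ∈ Finset.Icc 2 K, ⨆ t ∈ Finset.Icc (e (j-1) + 1) (e j),
          ∑ i ∈ Finset.Icc 1 t, |p t i - p (e (j-1)) i * Gs i (e (j-1)) / Gs i t|)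
        + ((K:ℝ) - 1) * ((Real.sqrt 3 + 3) * Real.sqrt T) := by
    rw [hsplitK]
    refine le_trans (abs_add_le _ _) ?_
    have h2 : |∑ j ∈ Finset.Icc 2 K, ∑ t ∈ Finset.Icc (e (j-1) + 1) (e j), F t|
        ≤ ∑ j ∈ Finset.Icc 2 K, ((Real.sqrt 3 + 3) * Real.sqrt T + (TB:ℝ) *
          ⨆ t ∈ Finset.Icc (e (j-1) + 1) (e j),
            ∑ i ∈ Finset.Icc 1 t, |p t i - p (e (j-1)) i * Gs i (e (j-1)) / Gs i t|) := by
      refine le_trans (Finset.abs_sum_le_sum_abs _ _) (Finset.sum_le_sum ?_)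
      intro j hj
      rw [Finset.mem_Icc] at hj
      exact hgroupj j hj.1 hj.2
    have h3 : ∑ j ∈ Finset.Icc 2 K, ((Real.sqrt 3 + 3) * Real.sqrt T + (TB:ℝ) *
          ⨆ t ∈ Finset.Icc (e (j-1) + 1) (e j),
            ∑ i ∈ Finset.Icc 1 t, |p t i - p (e (j-1)) i * Gs i (e (j-1)) / Gs i t|)
        = ((K:ℝ) - 1) * ((Real.sqrt 3 + 3) * Real.sqrt T) + (TB:ℝ) *
          ∑ j ∈ Finset.Icc 2 K, ⨆ t ∈ Finset.Icc (e (j-1) + 1) (e j),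
            ∑ i ∈ Finset.Icc 1 t, |p t i - p (e (j-1)) i * Gs i (e (j-1)) / Gs i t| := by
      rw [Finset.sum_add_distrib, Finset.sum_const, nsmul_eq_mul, hcard2K,
        ← Finset.mul_sum]
    have := add_le_add hgroup1 h2
    rw [h3] at this
    refine le_trans this (le_of_eq ?_)
    ring
  -- final arithmetic
  rw [hLHS, abs_mul, abs_of_pos (by positivity : (0:ℝ) < 1 / (T:ℝ))]
  have hSnn : 0 ≤ ∑ j ∈ Finset.Icc 2 K, ⨆ t ∈ Finset.Icc (e (j-1) + 1) (e j),
      ∑ i ∈ Finset.Icc 1 t, |p t i - p (e (j-1)) i * Gs i (e (j-1)) / Gs i t| :=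
    Finset.sum_nonneg fun j _ => hSupnn j
  have hTBle : (TB:ℝ) ≤ 2 * (T:ℝ)^β := by
    have h := Nat.ceil_lt_add_one (by positivity : (0:ℝ) ≤ (T:ℝ)^β)
    rw [hTBdef]
    linarith
  have hKle : (K:ℝ) - 1 ≤ (T:ℝ)^(1-β) := by
    have h := Nat.ceil_lt_add_one (by positivity : (0:ℝ) ≤ (T:ℝ)^(1-β))
    rw [hKdef]
    linarith
  have hK1c : (1:ℝ) ≤ (K:ℝ) := by exact_mod_cast hK1
  have hs3le : Real.sqrt 3 ≤ 2 := by
    nlinarith [Real.sq_sqrt (by norm_num : (0:ℝ) ≤ 3), Real.sqrt_nonneg 3]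
  have e1 : (T:ℝ)^(β-1) = (T:ℝ)^β / T := by
    rw [Real.rpow_sub hT0, Real.rpow_one]
  have e2 : (T:ℝ)^(1/2-β) = (T:ℝ)^(1-β) * Real.sqrt T / T := by
    rw [Real.sqrt_eq_rpow]
    rw [show (T:ℝ)^(1-β) * (T:ℝ)^((1:ℝ)/2) / (T:ℝ)
        = (T:ℝ)^(1-β) * (T:ℝ)^((1:ℝ)/2) / (T:ℝ)^(1:ℝ) by rw [Real.rpow_one],
      ← Real.rpow_add hT0, ← Real.rpow_sub hT0]
    ring_nf
  calc 1 / (T:ℝ) * |∑ t ∈ Finset.Icc 1 T, F t|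
      ≤ 1 / (T:ℝ) * ((TB:ℝ) * (1 + ∑ j ∈ Finset.Icc 2 K,
          ⨆ t ∈ Finset.Icc (e (j-1) + 1) (e j),
            ∑ i ∈ Finset.Icc 1 t, |p t i - p (e (j-1)) i * Gs i (e (j-1)) / Gs i t|)
        + ((K:ℝ) - 1) * ((Real.sqrt 3 + 3) * Real.sqrt T)) :=
        mul_le_mul_of_nonneg_left hbig (by positivity)
    _ ≤ 12 * ((T:ℝ) ^ (1/2 - β) + (T:ℝ) ^ (β - 1) *
          (1 + ∑ j ∈ Finset.Icc 2 K, ⨆ t ∈ Finset.Icc (e (j-1) + 1) (e j),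
            ∑ i ∈ Finset.Icc 1 t,
              |p t i - p (e (j-1)) i * Gs i (e (j-1)) / Gs i t|)) := by
        rw [e1, e2]
        set Ssum := ∑ j ∈ Finset.Icc 2 K, ⨆ t ∈ Finset.Icc (e (j-1) + 1) (e j),
          ∑ i ∈ Finset.Icc 1 t, |p t i - p (e (j-1)) i * Gs i (e (j-1)) / Gs i t|
          with hSsum
        have hraw : (TB:ℝ) * (1 + Ssum) + ((K:ℝ) - 1) * ((Real.sqrt 3 + 3) * Real.sqrt T)
            ≤ 12 * ((T:ℝ)^(1-β) * Real.sqrt T + (T:ℝ)^β * (1 + Ssum)) := by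
          have h1 : (TB:ℝ) * (1 + Ssum) ≤ 12 * ((T:ℝ)^β * (1 + Ssum)) := by
            rw [show 12 * ((T:ℝ)^β * (1 + Ssum)) = 12 * (T:ℝ)^β * (1 + Ssum) by ring]
            exact mul_le_mul_of_nonneg_right (by linarith) (by linarith)
          have h2 : ((K:ℝ) - 1) * ((Real.sqrt 3 + 3) * Real.sqrt T)
              ≤ 12 * ((T:ℝ)^(1-β) * Real.sqrt T) := by
            have hKnn : 0 ≤ (K:ℝ) - 1 := by linarith
            have hsT : 0 ≤ Real.sqrt T := Real.sqrt_nonneg _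
            nlinarith [mul_nonneg hsT (sub_nonneg.2 hKle),
              mul_nonneg (mul_nonneg hKnn hsT) (by positivity : (0:ℝ) ≤ Real.sqrt 3 + 3),
              mul_le_mul_of_nonneg_right hKle hsT]
          linarith
        calc 1 / (T:ℝ) * ((TB:ℝ) * (1 + Ssum)
              + ((K:ℝ) - 1) * ((Real.sqrt 3 + 3) * Real.sqrt T))
            ≤ 1 / (T:ℝ) * (12 * ((T:ℝ)^(1-β) * Real.sqrt T + (T:ℝ)^β * (1 + Ssum))) :=
              mul_le_mul_of_nonneg_left hraw (by positivity)
          _ = 12 * ((T:ℝ)^(1-β) * Real.sqrt T / T + (T:ℝ)^β / T * (1 + Ssum)) := by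
              field_simp
end

section
/- (Slow decay of cumulative gradient ratios.) Let α ∈ (0, 1] and let a_1, …, a_t be real numbers with α ≤ |a_s| ≤ 1 for all s. Then for all integers 1 ≤ u < t: 1 − sqrt(Σ_{s=1}^{u} a_s²) / sqrt(Σ_{s=1}^{t} a_s²) ≤ (t − u) / (2 α² u). -/
lemma aux_sqrt_ratio (x y : ℝ) (hx : 0 < x) (hxy : x ≤ y) :
    1 - x / y ≤ (y ^ 2 - x ^ 2) / (2 * x ^ 2) := by
  have hy : 0 < y := lt_of_lt_of_le hx hxy
  have h1 : 1 - x / y = (y - x) / y := by field_simp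
  rw [h1, div_le_div_iff₀ hy (by positivity)]
  nlinarith [sq_nonneg (y - x), mul_pos hx hy]

/-- Slow decay of cumulative gradient ratios: if `α ≤ |a_s| ≤ 1` for all `s ≤ t`, then
for all `1 ≤ u < t`,
`1 - sqrt(Σ_{s≤u} a_s²)/sqrt(Σ_{s≤t} a_s²) ≤ (t - u)/(2 α² u)`. -/
theorem cumulative_gradient_ratio_decay (α : ℝ) (hα : 0 < α) (hα1 : α ≤ 1)
    (t : ℕ) (a : ℕ → ℝ) (ha : ∀ s ∈ Finset.Icc 1 t, α ≤ |a s| ∧ |a s| ≤ 1) :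
    ∀ u : ℕ, 1 ≤ u → u < t →
      1 - Real.sqrt (∑ s ∈ Finset.Icc 1 u, a s ^ 2) /
          Real.sqrt (∑ s ∈ Finset.Icc 1 t, a s ^ 2)
        ≤ ((t:ℝ) - (u:ℝ)) / (2 * α ^ 2 * u) := by
  intro u hu hut
  set A := ∑ s ∈ Finset.Icc 1 u, a s ^ 2 with hAdef
  set B := ∑ s ∈ Finset.Icc 1 t, a s ^ 2 with hBdef
  have hsub : Finset.Icc 1 u ⊆ Finset.Icc 1 t := by
    apply Finset.Icc_subset_Icc le_rfl hut.le
  -- lower bound on A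
  have hAlb : α ^ 2 * u ≤ A := by
    have : ∀ s ∈ Finset.Icc 1 u, α ^ 2 ≤ a s ^ 2 := by
      intro s hs
      have hs' := ha s (hsub hs)
      have := hs'.1
      nlinarith [abs_nonneg (a s), sq_abs (a s)]
    calc α ^ 2 * u = ∑ _s ∈ Finset.Icc 1 u, α ^ 2 := by
          rw [Finset.sum_const, Nat.card_Icc]; simp [mul_comm]
      _ ≤ A := Finset.sum_le_sum this
  have hApos : 0 < A := lt_of_lt_of_le (by positivity) hAlb
  have hAB : A ≤ B := Finset.sum_le_sum_of_subset_of_nonneg hsub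
    (fun i _ _ => by positivity)
  -- upper bound on B - A
  have hBA : B - A ≤ (t : ℝ) - u := by
    have hdiff : B - A = ∑ s ∈ Finset.Icc 1 t \ Finset.Icc 1 u, a s ^ 2 := by
      rw [sub_eq_iff_eq_add]; exact (Finset.sum_sdiff hsub).symm
    have hle : ∑ s ∈ Finset.Icc 1 t \ Finset.Icc 1 u, a s ^ 2 ≤
        ∑ _s ∈ Finset.Icc 1 t \ Finset.Icc 1 u, (1 : ℝ) := by
      apply Finset.sum_le_sum
      intro s hs
      have hs' := ha s (Finset.mem_sdiff.mp hs).1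
      nlinarith [abs_nonneg (a s), sq_abs (a s), hs'.2]
    have hcard : (Finset.Icc 1 t \ Finset.Icc 1 u).card = t - u := by
      rw [Finset.card_sdiff_of_subset hsub, Nat.card_Icc, Nat.card_Icc]
      omega
    rw [hdiff]
    calc _ ≤ _ := hle
      _ = ((t - u : ℕ) : ℝ) := by rw [Finset.sum_const, hcard]; simp
      _ = (t : ℝ) - u := by
          rw [Nat.cast_sub hut.le]
  have hx : 0 < Real.sqrt A := Real.sqrt_pos.mpr hApos
  have hxy : Real.sqrt A ≤ Real.sqrt B := Real.sqrt_le_sqrt hAB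
  have key := aux_sqrt_ratio (Real.sqrt A) (Real.sqrt B) hx hxy
  rw [Real.sq_sqrt (le_of_lt hApos), Real.sq_sqrt (le_trans hApos.le hAB)] at key
  refine key.trans ?_
  apply div_le_div₀ (sub_nonneg.mpr (Nat.cast_le.mpr hut.le)) hBA (by positivity)
  have : (0:ℝ) < (u:ℝ) := by exact_mod_cast hu
  nlinarith
end

section
/- (Excess pinball risk upper bound under a density upper bound.) Let α ∈ (0,1), D > 0, L > 0, and let S be a real-valued random variable supported on [0, D] with a Lebesgue density f satisfying f(x) ≤ L/D for all x ∈ [0, D]. Let s* ∈ [0, D] satisfy P(S ≤ s*) = 1 − α. Then for every s ∈ [0, D]: E[ℓ_{1−α}(S, s)] − E[ℓ_{1−α}(S, s*)] ≤ L (s* − s)² / (2D). -/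
/-!
Writing `ℓ(x, c) = α (c - x) + (x - c)⁺`, the difference `ℓ(x, s) - ℓ(x, s*)` is
`(s - s*) (1{x ≤ s*} - (1 - α))` plus `|x - s|` on the interval between `s` and `s*`.
The first term has mean zero exactly because `s*` is the `(1 - α)`-quantile, and by the
density bound the second has mean at most `(L / D) ∫ |x - s| = L (s* - s)² / (2D)` over that
interval.
-/

open MeasureTheory Set
open scoped Interval

lemma pinball_eq (α x c : ℝ) : pinball α x c = α * (c - x) + max (x - c) 0 := by
  rw [pinball, ← max_add_add_left, add_zero]
  ring_nf

lemma continuous_pinball (α c : ℝ) : Continuous fun x => pinball α x c := by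
  unfold pinball; fun_prop

lemma pinball_sub_pinball (α x s t : ℝ) :
    pinball α x s - pinball α x t =
      (s - t) * ((Iic t).indicator (1 : ℝ → ℝ) x - (1 - α)) +
        (Ι s t).indicator (fun y => |y - s|) x := by
  rcases le_total s t with h | h
  all_goals
    simp only [pinball_eq, uIoc_of_le, uIoc_of_ge, h, indicator_apply, mem_Iic, mem_Ioc,
      Pi.one_apply]
    split_ifs <;> simp only [max_def, abs_eq_max_neg] <;> split_ifs <;> grind

lemma integrable_pinball {ν : Measure ℝ} [IsFiniteMeasure ν] (hν : Integrable id ν)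
    (α c : ℝ) :
    Integrable (fun x => pinball α x c) ν := by
  simp_rw [pinball_eq]
  exact (((integrable_const c).sub hν).const_mul α).add (hν.sub (integrable_const c)).pos_part

lemma integral_pinball_sub_integral_pinball {ν : Measure ℝ} [IsProbabilityMeasure ν]
    (hν : Integrable id ν) (α s t : ℝ) :
    ∫ x, pinball α x s ∂ν - ∫ x, pinball α x t ∂ν =
      (s - t) * (ν.real (Iic t) - (1 - α)) + ∫ x in Ι s t, |x - s| ∂ν := by
  have h_ind : Integrable ((Iic t).indicator (1 : ℝ → ℝ)) ν :=
    (integrable_const 1).indicator measurableSet_Iic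
  have h_lin :
      Integrable (fun x => (s - t) * ((Iic t).indicator (1 : ℝ → ℝ) x - (1 - α))) ν :=
    (h_ind.sub (integrable_const _)).const_mul _
  have h_abs : Integrable (fun x => |x - s|) ν := (hν.sub (integrable_const s)).abs
  rw [← integral_sub (integrable_pinball hν α s) (integrable_pinball hν α t)]
  simp_rw [pinball_sub_pinball]
  rw [integral_add h_lin (h_abs.indicator measurableSet_uIoc), integral_const_mul,
    integral_sub h_ind (integrable_const _), integral_indicator_one measurableSet_Iic,
    integral_const, integral_indicator measurableSet_uIoc, probReal_univ, one_smul]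

lemma setIntegral_withDensity_le_mul {X : Type*} [MeasurableSpace X] {μ : Measure X}
    {f g : X → ℝ} {A : Set X} {M : ℝ} (hA : MeasurableSet A) (hM : 0 ≤ M)
    (hf : ∀ x ∈ A, f x ≤ M) (hg : ∀ x ∈ A, 0 ≤ g x) (hgA : IntegrableOn g A μ) :
    ∫ x in A, g x ∂μ.withDensity (fun x => ENNReal.ofReal (f x)) ≤
      M * ∫ x in A, g x ∂μ := by
  have hle : (μ.withDensity fun x => ENNReal.ofReal (f x)).restrict A ≤
      ENNReal.ofReal M • μ.restrict A := by
    rw [restrict_withDensity hA, ← withDensity_const]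
    exact withDensity_mono <|
      (ae_restrict_iff' hA).2 (.of_forall fun x hx => ENNReal.ofReal_le_ofReal (hf x hx))
  have hg_nonneg : 0 ≤ᵐ[ENNReal.ofReal M • μ.restrict A] g :=
    Measure.ae_smul_measure ((ae_restrict_iff' hA).2 (.of_forall hg)) _
  calc ∫ x in A, g x ∂μ.withDensity (fun x => ENNReal.ofReal (f x))
      ≤ ∫ x, g x ∂(ENNReal.ofReal M • μ.restrict A) :=
        integral_mono_measure hle hg_nonneg (hgA.smul_measure ENNReal.ofReal_ne_top)
    _ = M * ∫ x in A, g x ∂μ := by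
        rw [integral_smul_measure, ENNReal.toReal_ofReal hM, smul_eq_mul]

lemma integral_uIoc_abs_sub_left (a b : ℝ) : ∫ x in Ι a b, |x - a| = (b - a) ^ 2 / 2 := by
  rcases le_total a b with hab | hba
  · rw [uIoc_of_le hab, ← intervalIntegral.integral_of_le hab,
      intervalIntegral.integral_congr (g := fun x => x - a) fun x hx => abs_of_nonneg ?_,
      intervalIntegral.integral_comp_sub_right (fun x => x)]
    · simp only [sub_self, integral_id]; ring
    · rw [uIcc_of_le hab] at hx; linarith [hx.1]
  · rw [uIoc_of_ge hba, ← intervalIntegral.integral_of_le hba,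
      intervalIntegral.integral_congr (g := fun x => a - x) fun x hx => ?_,
      intervalIntegral.integral_comp_sub_left (fun x => x)]
    · simp only [sub_self, integral_id]; ring
    · rw [uIcc_of_le hba] at hx
      rw [abs_sub_comm]; exact abs_of_nonneg (sub_nonneg.2 hx.2)

theorem pinball_excess_risk_upper_bound_general
    {Ω : Type*} [MeasurableSpace Ω] (μ : Measure Ω) [IsProbabilityMeasure μ]
    (α D L : ℝ) (hD : 0 < D) (hL : 0 < L)
    (S : Ω → ℝ) (hmeas : Measurable S)
    (hsupp : ∀ᵐ ω ∂μ, S ω ∈ Set.Icc 0 D)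
    (f : ℝ → ℝ)
    (hdensity : Measure.map S μ = volume.withDensity (fun x => ENNReal.ofReal (f x)))
    (hf_ub : ∀ x ∈ Set.Icc (0:ℝ) D, f x ≤ L / D)
    (sstar : ℝ) (hsstar : sstar ∈ Set.Icc 0 D)
    (hquantile : (μ {ω | S ω ≤ sstar}).toReal = 1 - α) :
    ∀ s ∈ Set.Icc (0:ℝ) D,
      (∫ ω, pinball α (S ω) s ∂μ) - (∫ ω, pinball α (S ω) sstar ∂μ)
        ≤ L * (sstar - s) ^ 2 / (2 * D) := by
  intro s hs
  have := Measure.isProbabilityMeasure_map (μ := μ) hmeas.aemeasurable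
  have hS : ∀ᵐ x ∂μ.map S, x ∈ Icc 0 D :=
    (ae_map_iff hmeas.aemeasurable measurableSet_Icc).2 hsupp
  have hS_int : Integrable id (μ.map S) := by
    refine .of_bound measurable_id.aestronglyMeasurable D ?_
    filter_upwards [hS] with x hx
    rw [id, Real.norm_eq_abs, abs_le]
    exact ⟨by linarith [hx.1], hx.2⟩
  have hcdf : (μ.map S).real (Iic sstar) = 1 - α := by
    rw [measureReal_def, Measure.map_apply hmeas measurableSet_Iic]
    exact hquantile
  have hsub : Ι s sstar ⊆ Icc 0 D := uIoc_subset_uIcc.trans (uIcc_subset_Icc hs hsstar)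
  simp_rw [← integral_map hmeas.aemeasurable (continuous_pinball α _).aestronglyMeasurable]
  rw [integral_pinball_sub_integral_pinball hS_int, hcdf, sub_self, mul_zero, zero_add, hdensity]
  calc ∫ x in Ι s sstar, |x - s| ∂volume.withDensity (fun x => ENNReal.ofReal (f x))
      ≤ L / D * ∫ x in Ι s sstar, |x - s| :=
        setIntegral_withDensity_le_mul measurableSet_uIoc (div_pos hL hD).le
          (fun x hx => hf_ub x (hsub hx)) (fun x _ => abs_nonneg _)
          (continuous_id.sub continuous_const).abs.integrableOn_uIoc
    _ = L * (sstar - s) ^ 2 / (2 * D) := by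
        rw [integral_uIoc_abs_sub_left]; field_simp

/-- Excess pinball risk upper bound under a density upper bound: if `S` is supported on
`[0, D]` with Lebesgue density `f ≤ L/D` on `[0, D]` and `s*` satisfies
`P(S ≤ s*) = 1 - α`, then for every `s ∈ [0, D]`,
`E[ℓ_{1-α}(S, s)] - E[ℓ_{1-α}(S, s*)] ≤ L (s* - s)² / (2D)`. -/
theorem pinball_excess_risk_upper_bound
    {Ω : Type*} [MeasurableSpace Ω] (μ : Measure Ω) [IsProbabilityMeasure μ]
    (α D L : ℝ) (hα : α ∈ Set.Ioo (0:ℝ) 1) (hD : 0 < D) (hL : 0 < L)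
    (S : Ω → ℝ) (hmeas : Measurable S)
    (hsupp : ∀ᵐ ω ∂μ, S ω ∈ Set.Icc 0 D)
    (f : ℝ → ℝ) (hf_nonneg : ∀ x, 0 ≤ f x) (hf_meas : Measurable f)
    (hdensity : Measure.map S μ = volume.withDensity (fun x => ENNReal.ofReal (f x)))
    (hf_ub : ∀ x ∈ Set.Icc (0:ℝ) D, f x ≤ L / D)
    (sstar : ℝ) (hsstar : sstar ∈ Set.Icc 0 D)
    (hquantile : (μ {ω | S ω ≤ sstar}).toReal = 1 - α) :
    ∀ s ∈ Set.Icc (0:ℝ) D,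
      (∫ ω, pinball α (S ω) s ∂μ) - (∫ ω, pinball α (S ω) sstar ∂μ)
        ≤ L * (sstar - s) ^ 2 / (2 * D) :=
  pinball_excess_risk_upper_bound_general μ α D L hD hL S hmeas hsupp f hdensity hf_ub sstar hsstar
    hquantile
end

section
/- (Coverage and linear regret of the trivial alternating algorithm.) Let α ∈ (0,1), D > 0, T ≥ 1. Define the data-independent predictions ŝ_t := D for t ∈ {1, …, ⌊(1−α)T⌋} and ŝ_t := 0 for t ∈ {⌊(1−α)T⌋+1, …, T}. Then: (i) for any true radii S_1, …, S_T ∈ (0, D], setting err_t := 1{ŝ_t < S_t}, the empirical coverage error satisfies |(1/T) Σ_{t=1}^{T} err_t − α| ≤ 1/T; and (ii) if moreover S_t = D/2 for all t, then the regret satisfies Σ_{t=1}^{T} ℓ_{1−α}(S_t, ŝ_t) − inf_{s ∈ ℝ} Σ_{t=1}^{T} ℓ_{1−α}(S_t, s) = (αD/2)·⌊(1−α)T⌋ + ((1−α)D/2)·(T − ⌊(1−α)T⌋) ≥ α(1−α)DT − D/2, i.e., the trivial algorithm suffers regret linear in T. -/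
open Finset

lemma sum_Icc_ite_le {M : Type*} [AddCommMonoid M] {m T : ℕ} (hmT : m ≤ T) (a b : M) :
    ∑ t ∈ Icc 1 T, (if t ≤ m then a else b) = m • a + (T - m) • b := by
  rw [show Icc 1 T = Ioc 0 T from Icc_add_one_left_eq_Ioc 0 T,
    ← sum_Ioc_consecutive _ (Nat.zero_le m) hmT,
    sum_congr rfl fun t ht => if_pos (mem_Ioc.mp ht).2,
    sum_congr rfl fun t ht => if_neg (not_le.mpr (mem_Ioc.mp ht).1)]
  simp

section Pinball

variable {α S s : ℝ}

lemma pinball_self : pinball α S S = 0 := by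
  simp [pinball]

lemma pinball_of_le (h : S ≤ s) : pinball α S s = α * (s - S) :=
  max_eq_right (by linarith)

lemma pinball_of_ge (h : s ≤ S) : pinball α S s = (1 - α) * (S - s) :=
  max_eq_left (by linarith)

lemma pinball_nonneg (hα : α ∈ Set.Icc (0 : ℝ) 1) : 0 ≤ pinball α S s := by
  rcases le_total S s with h | h
  · rw [pinball_of_le h]; nlinarith [hα.1]
  · rw [pinball_of_ge h]; nlinarith [hα.2]

lemma iInf_sum_pinball_eq_zero {ι : Type*} (hα : α ∈ Set.Icc (0 : ℝ) 1) (I : Finset ι) :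
    ⨅ s, ∑ _t ∈ I, pinball α S s = 0 := by
  refine le_antisymm ?_ (le_ciInf fun s => sum_nonneg fun _ _ => pinball_nonneg hα)
  calc ⨅ s, ∑ _t ∈ I, pinball α S s ≤ ∑ _t ∈ I, pinball α S S :=
        ciInf_le ⟨0, by rintro _ ⟨s, rfl⟩; exact sum_nonneg fun _ _ => pinball_nonneg hα⟩ S
    _ = 0 := by simp [pinball_self]

end Pinball

lemma sum_miscoverage_ite_le {D : ℝ} {S : ℕ → ℝ} {m T : ℕ} (hmT : m ≤ T)
    (hS : ∀ t ∈ Icc 1 T, S t ∈ Set.Ioc 0 D) :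
    ∑ t ∈ Icc 1 T, (if (if t ≤ m then D else 0) < S t then (1 : ℝ) else 0) = T - m := by
  have hpointwise : ∀ t ∈ Icc 1 T, (if (if t ≤ m then D else 0) < S t then (1 : ℝ) else 0) =
      if t ≤ m then 0 else 1 := by
    intro t ht
    obtain ⟨hSt0, hStD⟩ := hS t ht
    split_ifs <;> first | rfl | linarith
  rw [sum_congr rfl hpointwise, sum_Icc_ite_le hmT]
  simp [Nat.cast_sub hmT]

lemma sum_pinball_ite_le {α D : ℝ} {m T : ℕ} (hD : 0 ≤ D) (hmT : m ≤ T) :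
    ∑ t ∈ Icc 1 T, pinball α (D / 2) (if t ≤ m then D else 0) =
      α * D / 2 * m + (1 - α) * D / 2 * (T - m) := by
  simp_rw [apply_ite (pinball α (D / 2)), pinball_of_le (by linarith : D / 2 ≤ D),
    pinball_of_ge (by linarith : 0 ≤ D / 2)]
  rw [sum_Icc_ite_le hmT, nsmul_eq_mul, nsmul_eq_mul, Nat.cast_sub hmT]
  ring

lemma abs_one_div_mul_sub_sub_le_one_div {α m T : ℝ} (hT : 0 < T) (hm : m ≤ (1 - α) * T)
    (hm' : (1 - α) * T < m + 1) :
    |1 / T * (T - m) - α| ≤ 1 / T := by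
  have : 1 / T * (T - m) - α = ((1 - α) * T - m) / T := by field_simp; ring
  rw [this, abs_div, abs_of_pos hT, abs_of_nonneg (by linarith)]
  gcongr
  linarith

lemma regret_lower_bound {α D m T : ℝ} (hα : α ≤ 1) (hD : 0 ≤ D) (hm : m ≤ (1 - α) * T)
    (hm' : (1 - α) * T < m + 1) :
    α * D / 2 * m + (1 - α) * D / 2 * (T - m) ≥ α * (1 - α) * D * T - D / 2 := by
  -- with `f := (1-α)T - m ∈ [0, 1)` the difference of the two sides is `D/2 * ((1 - f) + 2(1-α)f)`
  nlinarith [mul_nonneg hD (mul_nonneg (sub_nonneg.mpr hα) (sub_nonneg.mpr hm))]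

/-- Coverage and linear regret of the trivial alternating algorithm, which predicts
`ŝ_t = D` for `t ≤ ⌊(1-α)T⌋` and `ŝ_t = 0` afterwards:
(i) for any true radii `S_t ∈ (0, D]`, the empirical coverage error is at most `1/T`;
(ii) if `S_t = D/2` for all `t`, the regret equals
`(αD/2)⌊(1-α)T⌋ + ((1-α)D/2)(T - ⌊(1-α)T⌋) ≥ α(1-α)DT - D/2`, i.e. it is linear in `T`. -/
theorem trivial_algorithm_coverage_and_linear_regret
    (α D : ℝ) (hα : α ∈ Set.Ioo (0:ℝ) 1) (hD : 0 < D) (T : ℕ) (hT : 1 ≤ T) :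
    (∀ S : ℕ → ℝ, (∀ t ∈ Finset.Icc 1 T, S t ∈ Set.Ioc 0 D) →
      |(1 / (T:ℝ)) * (∑ t ∈ Finset.Icc 1 T,
          if (if t ≤ ⌊(1 - α) * (T:ℝ)⌋₊ then D else 0) < S t then (1:ℝ) else 0) - α|
        ≤ 1 / T)
    ∧ ((∑ t ∈ Finset.Icc 1 T,
          pinball α (D / 2) (if t ≤ ⌊(1 - α) * (T:ℝ)⌋₊ then D else 0)) -
        (⨅ s : ℝ, ∑ t ∈ Finset.Icc 1 T, pinball α (D / 2) s)
        = α * D / 2 * (⌊(1 - α) * (T:ℝ)⌋₊ : ℝ)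
          + (1 - α) * D / 2 * ((T:ℝ) - (⌊(1 - α) * (T:ℝ)⌋₊ : ℝ)))
    ∧ (α * D / 2 * (⌊(1 - α) * (T:ℝ)⌋₊ : ℝ)
          + (1 - α) * D / 2 * ((T:ℝ) - (⌊(1 - α) * (T:ℝ)⌋₊ : ℝ))
        ≥ α * (1 - α) * D * T - D / 2) := by
  have hα' : α ∈ Set.Icc (0 : ℝ) 1 := Set.Ioo_subset_Icc_self hα
  set m := ⌊(1 - α) * (T : ℝ)⌋₊
  have hm : (m : ℝ) ≤ (1 - α) * T :=
    Nat.floor_le (mul_nonneg (sub_nonneg.mpr hα'.2) T.cast_nonneg)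
  have hm' : (1 - α) * (T : ℝ) < m + 1 := Nat.lt_floor_add_one _
  have hmT : m ≤ T := by
    exact_mod_cast hm.trans (mul_le_of_le_one_left T.cast_nonneg (by linarith [hα'.1]))
  refine ⟨fun S hS => ?_, ?_, regret_lower_bound hα'.2 hD.le hm hm'⟩
  · rw [sum_miscoverage_ite_le hmT hS]
    exact abs_one_div_mul_sub_sub_le_one_div (by exact_mod_cast hT) hm hm'
  · rw [sum_pinball_ite_le hD.le hmT, iInf_sum_pinball_eq_zero hα', sub_zero]
end
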